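/- arXiv:1311.5697 — 6 statements merged into one kernel-verified Lean document; each statement's English description precedes it below -/
import Mathlib

section
/- For a signature λ = (λ_1 ≥ ⋯ ≥ λ_N) of length N, let w_λ : ℝ → ℝ be the unique continuous piecewise linear function such that: its slope may change only at integer points; w_λ'(x) = ±1 for all non-integer x; w_λ(x) = x for x ≥ λ_1 and w_λ(x) = x + 2N for x ≤ λ_N − N; and inside (λ_N − N, λ_1) the slope equals −1 exactly on the N unit intervals whose midpoints are λ_i − i + 1/2, i = 1, …, N. For each N let λ(N) be a random signature of length N, and assume the random measures μ_{λ(N)} := (1/N) ∑_{i=1}^N δ((λ_i(N) − i + 1/2)/N) converge weakly in probability, as N → ∞, to a nonrandom probability measure σ supported in a bounded interval [a, b], with density p (so 0 ≤ p ≤ 1 a.e., p = 0 outside [a, b]). Then the random functions x ↦ (1/N) w_{λ(N)}(Nx) converge uniformly in probability (i.e. sup_{x ∈ ℝ} |(1/N) w_{λ(N)}(Nx) − w(x)| → 0 in probability) to the nonrandom function w uniquely determined by: w(x) = x for x > b, w(x) = x + 2 for x < a, and w'(x) = 1 − 2p(x) for almost every x ∈ [a, b]. -/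
open MeasureTheory Filter

/-- The continuous piecewise linear function `w_λ` associated with a signature
`λ = (λ_1 ≥ ⋯ ≥ λ_N)` (indexed here by `i : Fin N`, so `λ_{i+1} = l i`): it is the
unique continuous piecewise linear function whose slope changes only at integers,
equals `±1` off the integers, with `w_λ(x) = x` for `x ≥ λ_1`, `w_λ(x) = x + 2N` for
`x ≤ λ_N - N`, and slope `-1` exactly on the `N` unit intervals with midpoints
`λ_i - i + 1/2`.  Explicitly, the `i`-th descending unit interval contributes
`2 · max 0 (min 1 (λ_i - i + 1 - x))` to `w_λ(x) - x`. -/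
noncomputable def wSig (N : ℕ) (l : Fin N → ℤ) (x : ℝ) : ℝ :=
  x + ∑ i : Fin N, 2 * max 0 (min 1 ((l i : ℝ) - (i : ℝ) - x))

/-!
One descending unit interval of `w_λ` contributes to `w_λ(N x) / N - x` twice a ramp of width
`1 / N` evaluated at the corresponding atom of `μ_λ`, so `w_λ(N x) / N = x + 2 ∫ r dμ_λ` for a
smoothed indicator `r` of `(x, ∞)`. For large `N` this ramp is squeezed between two ramps of fixed
width `η`, to which weak convergence in probability applies; their `σ`-integrals lie within `2η`
of `σ((x, ∞))` because `p ≤ 1` makes `x ↦ σ((x, ∞))` 1-Lipschitz. Both sides being antitone in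
`x`, closeness at the points of a finite grid of mesh `η` gives closeness everywhere (Pólya's
argument), the grid reaching far enough that `σ` puts mass at most `η` beyond its ends.
-/

open Set Topology

namespace ScaledShape

section Ramp

variable {u w t : ℝ}

noncomputable def ramp (u w : ℝ) : BoundedContinuousFunction ℝ ℝ :=
  .mkOfBound ⟨fun t => max 0 (min 1 ((t - u) / w)), by fun_prop⟩ 1 fun s t => by
    rw [Real.dist_eq]
    exact abs_sub_le_of_nonneg_of_le (le_max_left _ _) (max_le zero_le_one (min_le_left _ _))
      (le_max_left _ _) (max_le zero_le_one (min_le_left _ _))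

theorem ramp_apply : ramp u w t = max 0 (min 1 ((t - u) / w)) := rfl

theorem ramp_nonneg : 0 ≤ ramp u w t := le_max_left _ _

theorem ramp_le_one : ramp u w t ≤ 1 := max_le zero_le_one (min_le_left _ _)

theorem ramp_eq_zero (hw : 0 < w) (ht : t ≤ u) : ramp u w t = 0 :=
  max_eq_left ((min_le_right _ _).trans (div_nonpos_of_nonpos_of_nonneg (by linarith) hw.le))

theorem ramp_eq_one (hw : 0 < w) (ht : u + w ≤ t) : ramp u w t = 1 := by
  rw [ramp_apply, min_eq_left ((one_le_div hw).mpr (by linarith)), max_eq_right zero_le_one]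

theorem ramp_le_ramp {u' w' : ℝ} (hw : 0 < w) (hw' : 0 < w') (h : u' + w' ≤ u) :
    ramp u w t ≤ ramp u' w' t := by
  rcases le_or_gt t u with ht | ht
  · exact (ramp_eq_zero hw ht).trans_le ramp_nonneg
  · exact ramp_le_one.trans (ramp_eq_one hw' (by linarith)).ge

theorem antitone_ramp (hw : 0 ≤ w) (t : ℝ) : Antitone fun u => ramp u w t :=
  fun _ _ h => max_le_max le_rfl (min_le_min le_rfl (by gcongr))

theorem indicator_Ioi_le_ramp (hw : 0 < w) : (Ioi (u + w)).indicator 1 t ≤ ramp u w t := by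
  by_cases ht : t ∈ Ioi (u + w)
  · rw [indicator_of_mem ht, ramp_eq_one hw ht.le]; rfl
  · rw [indicator_of_notMem ht]; exact ramp_nonneg

theorem ramp_le_indicator_Ioi (hw : 0 < w) : ramp u w t ≤ (Ioi u).indicator 1 t := by
  by_cases ht : t ∈ Ioi u
  · rw [indicator_of_mem ht]; exact ramp_le_one
  · rw [indicator_of_notMem ht, ramp_eq_zero hw (not_lt.mp ht)]

end Ramp

section Empirical

variable {N : ℕ}

noncomputable def empiricalMean (y : Fin N → ℝ) (f : ℝ → ℝ) : ℝ := (N : ℝ)⁻¹ * ∑ i, f (y i)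

theorem empiricalMean_mono (y : Fin N → ℝ) {f g : ℝ → ℝ} (h : ∀ t, f t ≤ g t) :
    empiricalMean y f ≤ empiricalMean y g :=
  mul_le_mul_of_nonneg_left (Finset.sum_le_sum fun i _ => h (y i)) (by positivity)

theorem empiricalMean_nonneg (y : Fin N → ℝ) {f : ℝ → ℝ} (h : ∀ t, 0 ≤ f t) :
    0 ≤ empiricalMean y f := by
  simpa [empiricalMean] using empiricalMean_mono y h

theorem empiricalMean_le_one (y : Fin N → ℝ) {f : ℝ → ℝ} (h : ∀ t, f t ≤ 1) :
    empiricalMean y f ≤ 1 := by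
  refine (empiricalMean_mono y h).trans ?_
  simp only [empiricalMean, Finset.sum_const, Finset.card_univ, Fintype.card_fin, nsmul_eq_mul,
    mul_one]
  exact inv_mul_le_one_of_le₀ le_rfl (Nat.cast_nonneg N)

/-- The atoms `(λ_i - i + 1/2) / N` of `μ_λ`, in the 0-based indexing of `wSig`. -/
noncomputable def scaledPoints (N : ℕ) (l : Fin N → ℤ) (i : Fin N) : ℝ :=
  ((l i : ℝ) - i - 1 / 2) / N

noncomputable def empiricalTail (N : ℕ) (l : Fin N → ℤ) (x : ℝ) : ℝ :=
  empiricalMean (scaledPoints N l) (ramp (x - (2 * N : ℝ)⁻¹) (N : ℝ)⁻¹)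

theorem inv_mul_wSig_mul (hN : 0 < N) (l : Fin N → ℤ) (x : ℝ) :
    (N : ℝ)⁻¹ * wSig N l (N * x) = x + 2 * empiricalTail N l x := by
  have hN' : (N : ℝ) ≠ 0 := by positivity
  have hterm : ∀ i, max 0 (min 1 ((l i : ℝ) - i - N * x)) =
      ramp (x - (2 * N : ℝ)⁻¹) (N : ℝ)⁻¹ (scaledPoints N l i) := by
    intro i
    rw [ramp_apply, scaledPoints]
    congr 2
    field_simp
    ring
  simp only [wSig, empiricalTail, empiricalMean, ← hterm, ← Finset.mul_sum]
  field_simp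

theorem antitone_empiricalTail (l : Fin N → ℤ) : Antitone (empiricalTail N l) :=
  fun _ _ h => mul_le_mul_of_nonneg_left (Finset.sum_le_sum fun _ _ =>
    antitone_ramp (by positivity) _ (by linarith)) (by positivity)

end Empirical

section Tail

variable {σ : Measure ℝ}

theorem withDensity_ofReal_le_self {α : Type*} [MeasurableSpace α] {μ : Measure α} {p : α → ℝ}
    (hp : ∀ᵐ x ∂μ, p x ≤ 1) : μ.withDensity (fun x => ENNReal.ofReal (p x)) ≤ μ := by
  conv_rhs => rw [← withDensity_one (μ := μ)]
  exact withDensity_mono (hp.mono fun x hx => ENNReal.ofReal_le_one.mpr hx)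

theorem measureReal_Ioi_le_add [IsFiniteMeasure σ] (hσ : σ ≤ volume) {u v : ℝ} (huv : u ≤ v) :
    σ.real (Ioi u) ≤ σ.real (Ioi v) + (v - u) := by
  calc σ.real (Ioi u) ≤ σ.real (Ioc u v) + σ.real (Ioi v) := by
        rw [← Ioc_union_Ioi_eq_Ioi huv]; exact measureReal_union_le _ _
    _ ≤ volume.real (Ioc u v) + σ.real (Ioi v) := by
        gcongr
        exact ENNReal.toReal_mono (by simp) (hσ _)
    _ = σ.real (Ioi v) + (v - u) := by rw [Real.volume_real_Ioc_of_le huv, add_comm]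

theorem measureReal_Ioi_le_integral_ramp [IsFiniteMeasure σ] {u w : ℝ} (hw : 0 < w) :
    σ.real (Ioi (u + w)) ≤ ∫ t, ramp u w t ∂σ := by
  rw [← integral_indicator_one measurableSet_Ioi]
  exact integral_mono ((integrable_const 1).indicator measurableSet_Ioi) ((ramp u w).integrable σ)
    fun t => indicator_Ioi_le_ramp hw

theorem integral_ramp_le_measureReal_Ioi [IsFiniteMeasure σ] {u w : ℝ} (hw : 0 < w) :
    ∫ t, ramp u w t ∂σ ≤ σ.real (Ioi u) := by
  rw [← integral_indicator_one measurableSet_Ioi]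
  exact integral_mono ((ramp u w).integrable σ) ((integrable_const 1).indicator measurableSet_Ioi)
    fun t => ramp_le_indicator_Ioi hw

theorem measureReal_Ioi_eq_one_sub_cdf [IsProbabilityMeasure σ] (x : ℝ) :
    σ.real (Ioi x) = 1 - ProbabilityTheory.cdf σ x := by
  rw [ProbabilityTheory.cdf_eq_real, ← compl_Iic, probReal_compl_eq_one_sub measurableSet_Iic]

theorem tendsto_measureReal_Ioi_atBot [IsProbabilityMeasure σ] :
    Tendsto (fun x => σ.real (Ioi x)) atBot (𝓝 1) := by
  simpa [measureReal_Ioi_eq_one_sub_cdf] using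
    (ProbabilityTheory.tendsto_cdf_atBot σ).const_sub 1

theorem tendsto_measureReal_Ioi_atTop [IsProbabilityMeasure σ] :
    Tendsto (fun x => σ.real (Ioi x)) atTop (𝓝 0) := by
  simpa [measureReal_Ioi_eq_one_sub_cdf] using
    (ProbabilityTheory.tendsto_cdf_atTop σ).const_sub 1

end Tail

section Grid

variable {F G : ℝ → ℝ} {A η δ : ℝ} {M : ℕ}

theorem exists_grid_bracket (hη : 0 < η) {x : ℝ} (hA : A ≤ x) (hx : x < A + M * η) :
    ∃ k < M, A + k * η ≤ x ∧ x ≤ A + (k + 1) * η := by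
  have hq : 0 ≤ (x - A) / η := div_nonneg (by linarith) hη.le
  refine ⟨⌊(x - A) / η⌋₊, (Nat.floor_lt hq).mpr ((div_lt_iff₀ hη).mpr (by linarith)), ?_, ?_⟩
  · linarith [(le_div_iff₀ hη).mp (Nat.floor_le hq)]
  · linarith [(div_lt_iff₀ hη).mp (Nat.lt_floor_add_one ((x - A) / η))]

theorem exists_grid_of_tendsto (hbot : Tendsto G atBot (𝓝 1)) (htop : Tendsto G atTop (𝓝 0))
    (hη : 0 < η) : ∃ (A : ℝ) (M : ℕ), 1 - η ≤ G A ∧ G (A + M * η) ≤ η := by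
  obtain ⟨A, hA⟩ :=
    (hbot.eventually (Ici_mem_nhds (by linarith : 1 - η < 1))).exists_forall_of_atBot
  obtain ⟨B, hB⟩ := (htop.eventually (Iic_mem_nhds hη)).exists_forall_of_atTop
  refine ⟨A, ⌈(B - A) / η⌉₊, hA A le_rfl, hB _ ?_⟩
  linarith [(div_le_iff₀ hη).mp (Nat.le_ceil ((B - A) / η))]

theorem abs_sub_le_of_grid (hF : Antitone F) (hG : Antitone G) (hF0 : ∀ x, 0 ≤ F x)
    (hF1 : ∀ x, F x ≤ 1) (hG0 : ∀ x, 0 ≤ G x) (hG1 : ∀ x, G x ≤ 1)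
    (hGlip : ∀ u v, u ≤ v → G u ≤ G v + (v - u)) (hη : 0 < η)
    (hA : 1 - η ≤ G A) (hB : G (A + M * η) ≤ η)
    (hgrid : ∀ k ≤ M, |F (A + k * η) - G (A + k * η)| ≤ δ) (x : ℝ) :
    |F x - G x| ≤ δ + η := by
  rw [abs_le]
  rcases le_or_gt x A with hxA | hAx
  · have h0 := abs_le.mp (by simpa using hgrid 0 (Nat.zero_le M))
    constructor <;> linarith [hF hxA, hG hxA, hF1 x, hG1 x]
  rcases le_or_gt (A + M * η) x with hBx | hxB
  · have hM := abs_le.mp (hgrid M le_rfl)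
    constructor <;> linarith [hF hBx, hG hBx, hF0 x, hG0 x]
  obtain ⟨k, hkM, hsx, hxt⟩ := exists_grid_bracket hη hAx.le hxB
  have hs := abs_le.mp (hgrid k hkM.le)
  have ht := abs_le.mp (hgrid (k + 1) hkM)
  push_cast at ht
  constructor <;> linarith [hF hsx, hF hxt, hG hsx, hG hxt, hGlip _ _ (hsx.trans hxt)]

end Grid

theorem tendsto_measure_biUnion_finset {α ι : Type*} {L : Filter α} {Ω : α → Type*}
    [∀ n, MeasurableSpace (Ω n)] {P : ∀ n, Measure (Ω n)} (s : Finset ι)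
    {E : ι → ∀ n, Set (Ω n)} (h : ∀ i ∈ s, Tendsto (fun n => P n (E i n)) L (𝓝 0)) :
    Tendsto (fun n => P n (⋃ i ∈ s, E i n)) L (𝓝 0) := by
  have hsum := tendsto_finsetSum s h
  rw [Finset.sum_const_zero] at hsum
  exact tendsto_of_tendsto_of_tendsto_of_le_of_le tendsto_const_nhds hsum (fun _ => zero_le)
    fun n => measure_biUnion_finset_le s _

variable {σ : Measure ℝ}

theorem abs_empiricalTail_sub_le [IsFiniteMeasure σ] (hσ : σ ≤ volume) {N : ℕ} (l : Fin N → ℤ)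
    {x η δ : ℝ} (hη : 0 < η) (hN : 1 ≤ 2 * N * η)
    (hlo : |empiricalMean (scaledPoints N l) (ramp (x + η) η) - ∫ t, ramp (x + η) η t ∂σ| ≤ δ)
    (hhi : |empiricalMean (scaledPoints N l) (ramp (x - 2 * η) η)
      - ∫ t, ramp (x - 2 * η) η t ∂σ| ≤ δ) :
    |empiricalTail N l x - σ.real (Ioi x)| ≤ 2 * η + δ := by
  have hN0 : (0 : ℝ) < N := by by_contra! h; nlinarith
  -- the ramp of `empiricalTail` rises on `[x - 1/(2N), x + 1/(2N)] ⊆ [x - η, x + η]`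
  have hhalf : (2 * N : ℝ)⁻¹ ≤ η := by rw [inv_le_iff_one_le_mul₀ (by positivity)]; linarith
  have hinv : (N : ℝ)⁻¹ = 2 * (2 * N : ℝ)⁻¹ := by field_simp
  have hF_lo : empiricalMean (scaledPoints N l) (ramp (x + η) η) ≤ empiricalTail N l x :=
    empiricalMean_mono _ fun t => ramp_le_ramp hη (by positivity) (by linarith)
  have hF_hi : empiricalTail N l x ≤ empiricalMean (scaledPoints N l) (ramp (x - 2 * η) η) :=
    empiricalMean_mono _ fun t => ramp_le_ramp (by positivity) hη (by linarith)
  have hσ_lo := measureReal_Ioi_le_add hσ (by linarith : x ≤ x + η + η)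
  have hσ_lo' := measureReal_Ioi_le_integral_ramp (σ := σ) (u := x + η) hη
  have hσ_hi := measureReal_Ioi_le_add hσ (by linarith : x - 2 * η ≤ x)
  have hσ_hi' := integral_ramp_le_measureReal_Ioi (σ := σ) (u := x - 2 * η) hη
  rw [abs_le] at hlo hhi ⊢
  constructor <;> linarith [hlo.1, hhi.2]

theorem abs_inv_mul_wSig_sub_le [IsProbabilityMeasure σ] (hσ : σ ≤ volume) {A η δ : ℝ}
    {M N : ℕ} (hη : 0 < η) (hA : 1 - η ≤ σ.real (Ioi A)) (hB : σ.real (Ioi (A + M * η)) ≤ η)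
    (hN : 1 ≤ 2 * N * η) (l : Fin N → ℤ)
    (hgrid : ∀ k ≤ M, ∀ f ∈ [ramp (A + k * η + η) η, ramp (A + k * η - 2 * η) η],
      |empiricalMean (scaledPoints N l) f - ∫ t, f t ∂σ| ≤ δ) (x : ℝ) :
    |(N : ℝ)⁻¹ * wSig N l (N * x) - (x + 2 * σ.real (Ioi x))| ≤ 2 * (δ + 3 * η) := by
  have hN0 : 0 < N := Nat.pos_of_ne_zero (by rintro rfl; norm_num at hN)
  rw [inv_mul_wSig_mul hN0, add_sub_add_left_eq_sub, ← mul_sub, abs_mul, abs_two]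
  gcongr
  have := abs_sub_le_of_grid (antitone_empiricalTail l)
    (fun _ _ h => measureReal_mono (Ioi_subset_Ioi h))
    (fun _ => empiricalMean_nonneg _ fun _ => ramp_nonneg)
    (fun _ => empiricalMean_le_one _ fun _ => ramp_le_one) (fun _ => measureReal_nonneg)
    (fun _ => measureReal_le_one) (fun _ _ => measureReal_Ioi_le_add hσ) hη hA hB
    (fun k hk => abs_empiricalTail_sub_le hσ l hη hN (hgrid k hk _ (by simp))
      (hgrid k hk _ (by simp))) x
  linarith

end ScaledShape

open ScaledShape

theorem scaled_shapes_converge_uniformly_in_probability_general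
    (Ω : ℕ → Type) [∀ N, MeasurableSpace (Ω N)]
    (P : ∀ N, Measure (Ω N)) [∀ N, IsProbabilityMeasure (P N)]
    (lam : ∀ N : ℕ, Ω N → Fin N → ℤ)
    (p : ℝ → ℝ)
    (σ : Measure ℝ) [IsProbabilityMeasure σ]
    (hdens : σ = volume.withDensity fun x => ENNReal.ofReal (p x))
    (hp01 : ∀ᵐ x ∂(volume : Measure ℝ), 0 ≤ p x ∧ p x ≤ 1)
    (hconv : ∀ f : BoundedContinuousFunction ℝ ℝ, ∀ ε > (0 : ℝ),
      Tendsto (fun N =>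
          P N {ω | ε < |(N : ℝ)⁻¹ *
            ∑ i : Fin N, f ((((lam N ω i : ℝ) - (i : ℝ) - 1/2)) / N) - ∫ x, f x ∂σ|})
        atTop (nhds 0)) :
    ∀ ε > (0 : ℝ),
      Tendsto (fun N =>
          P N {ω | ε < ⨆ x : ℝ,
            |(N : ℝ)⁻¹ * wSig N (lam N ω) (N * x) - (x + 2 * (σ (Set.Ioi x)).toReal)|})
        atTop (nhds 0) := by
  intro ε hε
  classical
  obtain ⟨η, hη, hηε⟩ : ∃ η, 0 < η ∧ 8 * η = ε := ⟨ε / 8, by positivity, by ring⟩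
  have hσ : σ ≤ volume := hdens ▸ withDensity_ofReal_le_self (hp01.mono fun _ hx => hx.2)
  obtain ⟨A, M, hA, hB⟩ := exists_grid_of_tendsto (tendsto_measureReal_Ioi_atBot (σ := σ))
    tendsto_measureReal_Ioi_atTop hη
  let tests : Finset (BoundedContinuousFunction ℝ ℝ) := (Finset.range (M + 1)).biUnion fun k =>
    {ramp (A + k * η + η) η, ramp (A + k * η - 2 * η) η}
  have hbad := tendsto_measure_biUnion_finset tests fun f _ => hconv f η hη
  refine tendsto_of_tendsto_of_tendsto_of_le_of_le' tendsto_const_nhds hbad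
    (.of_forall fun _ => zero_le) ?_
  have hN : ∀ᶠ N : ℕ in atTop, 1 ≤ (N : ℝ) * (2 * η) :=
    (tendsto_natCast_atTop_atTop.atTop_mul_const (by positivity)).eventually_ge_atTop 1
  filter_upwards [hN] with N hN
  refine measure_mono fun ω hω => ?_
  by_contra hgood
  simp only [Set.mem_iUnion, not_exists] at hgood
  have htests : ∀ k ≤ M, ∀ f ∈ [ramp (A + k * η + η) η, ramp (A + k * η - 2 * η) η],
      f ∈ tests := fun k hk f hf =>
    Finset.mem_biUnion.mpr ⟨k, Finset.mem_range.mpr (by omega), by simpa using hf⟩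
  refine hω.not_ge (Real.iSup_le (fun x => ?_) hε.le)
  refine (abs_inv_mul_wSig_sub_le hσ hη hA hB (by linarith) (lam N ω)
    (fun k hk f hf => not_lt.mp (hgood f (htests k hk f hf))) x).trans (by linarith)

/-- If the random measures `μ_{λ(N)}` of random signatures `λ(N)`
converge weakly in probability to a nonrandom probability measure `σ` supported in
`[a,b]` with density `p` (`0 ≤ p ≤ 1` a.e., `p = 0` outside `[a,b]`), then the scaled
shapes `x ↦ (1/N) w_{λ(N)}(Nx)` converge uniformly in probability to the nonrandom
function `w(x) = x + 2σ((x,∞))`, which is the unique function with `w(x) = x` for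
`x > b`, `w(x) = x + 2` for `x < a`, and `w' = 1 - 2p` a.e. on `[a,b]`. -/
theorem scaled_shapes_converge_uniformly_in_probability
    (Ω : ℕ → Type) [∀ N, MeasurableSpace (Ω N)]
    (P : ∀ N, Measure (Ω N)) [∀ N, IsProbabilityMeasure (P N)]
    (lam : ∀ N : ℕ, Ω N → Fin N → ℤ)
    (hmeas : ∀ N (i : Fin N), Measurable (fun ω => lam N ω i))
    (hdec : ∀ N (ω : Ω N) (i j : Fin N), i ≤ j → lam N ω j ≤ lam N ω i)
    (a b : ℝ) (hab : a ≤ b)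
    (p : ℝ → ℝ) (hp : Measurable p)
    (σ : Measure ℝ) [IsProbabilityMeasure σ]
    (hdens : σ = volume.withDensity fun x => ENNReal.ofReal (p x))
    (hp01 : ∀ᵐ x ∂(volume : Measure ℝ), 0 ≤ p x ∧ p x ≤ 1)
    (hpout : ∀ x, x ∉ Set.Icc a b → p x = 0)
    (hconv : ∀ f : BoundedContinuousFunction ℝ ℝ, ∀ ε > (0 : ℝ),
      Tendsto (fun N =>
          P N {ω | ε < |(N : ℝ)⁻¹ *
            ∑ i : Fin N, f ((((lam N ω i : ℝ) - (i : ℝ) - 1/2)) / N) - ∫ x, f x ∂σ|})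
        atTop (nhds 0)) :
    ∀ ε > (0 : ℝ),
      Tendsto (fun N =>
          P N {ω | ε < ⨆ x : ℝ,
            |(N : ℝ)⁻¹ * wSig N (lam N ω) (N * x) - (x + 2 * (σ (Set.Ioi x)).toReal)|})
        atTop (nhds 0) :=
  scaled_shapes_converge_uniformly_in_probability_general Ω P lam p σ hdens hp01 hconv
end

section
/- Let λ = (λ_1 ≥ ⋯ ≥ λ_N) be a signature of length N, let μ_λ := (1/N) ∑_{i=1}^N δ((λ_i − i + 1/2)/N), and let w_λ : ℝ → ℝ be the continuous piecewise linear function of slope ±1 associated with λ (w_λ(x) = x for x ≥ λ_1, w_λ(x) = x + 2N for x ≤ λ_N − N, slope −1 exactly on the N unit intervals with midpoints λ_i − i + 1/2). Define w̃_λ(x) := x + 2 μ_λ((x, +∞)). Then for all x ∈ ℝ, |w̃_λ(x) − (1/N) w_λ(Nx)| ≤ 1/N. -/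
open MeasureTheory

/-!
With `y = N x` and `s_i = λ_i - i + 1 - y`, the atom `(λ_i - i + 1/2)/N` of `μ_λ` lies to the
right of `x` iff `1/2 < s_i`, while the `i`-th descending interval contributes
`2 · clamp₀₁(s_i)` to `w_λ(y) - y`. Hence `N (w̃_λ(x) - w_λ(Nx)/N)` is twice the sum of
`[1/2 < s_i] - clamp₀₁(s_i)`. Each term has absolute value at most `1/2` and vanishes unless
`s_i ∈ (0, 1)`; since the integers `λ_i - i` are pairwise distinct, at most one `s_i` lies in
that open unit interval.
-/

theorem norm_sum_le_of_support_subsingleton {ι E : Type*} [Fintype ι]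
    [SeminormedAddCommGroup E] {g : ι → E} {c : ℝ} (hc : 0 ≤ c) (hg : ∀ i, ‖g i‖ ≤ c)
    (hsupp : (Function.support g).Subsingleton) : ‖∑ i, g i‖ ≤ c := by
  obtain h | ⟨i, hi⟩ := hsupp.eq_empty_or_singleton
  · simpa [Function.support_eq_empty_iff.mp h] using hc
  · rw [Finset.sum_eq_single i (fun j _ hj => Function.notMem_support.mp (hi ▸ hj)) (by simp)]
    exact hg i

theorem abs_step_sub_clamp_le (t : ℝ) :
    |(if 1/2 < t then 1 else 0) - max 0 (min 1 t)| ≤ 1/2 := by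
  split_ifs <;> rw [abs_le] <;> constructor <;>
    cases max_cases 0 (min 1 t) <;> cases min_cases 1 t <;> linarith

theorem mem_Ioo_of_step_sub_clamp_ne_zero {t : ℝ}
    (ht : (if 1/2 < t then (1 : ℝ) else 0) - max 0 (min 1 t) ≠ 0) : t ∈ Set.Ioo 0 1 := by
  by_contra hnot
  rcases not_and_or.mp hnot with h | h <;> rw [not_lt] at h <;> apply ht
  · rw [if_neg (by linarith), max_eq_left (min_le_of_right_le h)]
    norm_num
  · rw [if_pos (by linarith), min_eq_left h, max_eq_right zero_le_one]
    norm_num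

theorem Int.eq_of_sub_mem_Ioo {m n : ℤ} {y : ℝ} (hm : (m : ℝ) - y ∈ Set.Ioo 0 1)
    (hn : (n : ℝ) - y ∈ Set.Ioo 0 1) : m = n := by
  have floor_eq {k : ℤ} (hk : (k : ℝ) - y ∈ Set.Ioo 0 1) : ⌊y⌋ = k - 1 := by
    rw [Int.floor_eq_iff]
    push_cast
    constructor <;> linarith [hk.1, hk.2]
  linarith [floor_eq hm, floor_eq hn]

/-- For a signature `λ` of length `N ≥ 1`, with
`μ_λ = (1/N) ∑ δ((λ_i - i + 1/2)/N)` and `w̃_λ(x) = x + 2 μ_λ((x,∞))`, one has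
`|w̃_λ(x) - (1/N) w_λ(Nx)| ≤ 1/N` for all real `x`.  Here
`μ_λ((x,∞)) = (1/N)·#{i : (λ_i - i + 1/2)/N > x}`. -/
theorem tilde_w_close_to_scaled_shape
    (N : ℕ) (hN : 1 ≤ N) (lam : Fin N → ℤ)
    (hdec : ∀ i j : Fin N, i ≤ j → lam j ≤ lam i) :
    ∀ x : ℝ,
      |(x + 2 * (((Finset.univ.filter
            (fun i : Fin N => x < ((lam i : ℝ) - (i : ℝ) - 1/2) / N)).card : ℝ) / N))
        - (N : ℝ)⁻¹ * wSig N lam (N * x)| ≤ 1 / N := by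
  intro x
  have hN0 : (0 : ℝ) < N := by exact_mod_cast hN
  set s : Fin N → ℤ := fun i => lam i - i
  set g : Fin N → ℝ := fun i =>
    (if 1/2 < (s i : ℝ) - N * x then 1 else 0) - max 0 (min 1 ((s i : ℝ) - N * x))
  have hcard : ((Finset.univ.filter
      (fun i : Fin N => x < ((lam i : ℝ) - (i : ℝ) - 1/2) / N)).card : ℝ)
      = ∑ i, if 1/2 < (s i : ℝ) - N * x then 1 else 0 := by
    rw [Finset.sum_boole]
    congr 3
    ext i
    rw [lt_div_iff₀ hN0]
    simp only [s, Int.cast_sub, Int.cast_natCast]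
    constructor <;> intro h <;> linarith
  have hdiff : x + 2 * ((∑ i, if 1/2 < (s i : ℝ) - N * x then 1 else 0) / N)
      - (N : ℝ)⁻¹ * wSig N lam (N * x) = 2 / N * ∑ i, g i := by
    simp only [wSig, g, s, Int.cast_sub, Int.cast_natCast, Finset.sum_sub_distrib,
      ← Finset.mul_sum]
    field_simp
    ring
  have hinj : Function.Injective s :=
    (Antitone.add_strictAnti (fun i j => hdec i j)
      (fun i j (h : i < j) => neg_lt_neg (Int.ofNat_lt.mpr h))).injective
  have hsupp : (Function.support g).Subsingleton := fun i hi j hj =>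
    hinj (Int.eq_of_sub_mem_Ioo (mem_Ioo_of_step_sub_clamp_ne_zero hi)
      (mem_Ioo_of_step_sub_clamp_ne_zero hj))
  have hsum : |∑ i, g i| ≤ 1/2 :=
    norm_sum_le_of_support_subsingleton (by norm_num) (fun i => abs_step_sub_clamp_le _) hsupp
  rw [hcard, hdiff, abs_mul, abs_of_pos (by positivity)]
  calc 2 / (N : ℝ) * |∑ i, g i| ≤ 2 / N * (1/2) := by gcongr
    _ = 1 / N := by ring
end

section
/- For each N ≥ 1, let ω(N) = (α^+(N), α^−(N), β^+(N), β^−(N), γ^+(N), γ^−(N)) be a sextuple where α_1^±(N) ≥ α_2^±(N) ≥ ⋯ ≥ 0 and β_1^±(N) ≥ β_2^±(N) ≥ ⋯ ≥ 0 are nonincreasing summable sequences of nonnegative reals with β_1^+(N) + β_1^−(N) ≤ 1, and γ^±(N) ≥ 0. Define, for z in a small complex disc around 0, L_N(z) := γ^+(N) z + γ^−(N)(1/(z+1) − 1) + ∑_{i≥1} log(1 + β_i^+(N) z) − ∑_{i≥1} log(1 − α_i^+(N) z) + ∑_{i≥1} log(1 − β_i^−(N) z/(1+z)) − ∑_{i≥1}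 log(1 + α_i^−(N) z/(1+z)), using the principal branch of the logarithm. Assume: (a) γ^+(N)/N and γ^−(N)/N converge as N → ∞; (b) the measures A_N^± := (1/N) ∑_{i≥1} δ(α_i^±(N)) and B_N^± := (1/N) ∑_{i≥1} δ(β_i^±(N)) converge weakly to finite compactly supported measures on ℝ; (c) there is C_1 > 0 with α_i^±(N) < C_1 and β_i^±(N) < C_1 for all i, N; (d) there is C_2 > 0 such that, for each N, the number of nonzero parameters among the α_i^±(N) and β_i^±(N) is at most C_2 N. Then there exist ε > 0 and a function P analytic on {z ∈ ℂ : |z| ≤ ε} such that (1/N) L_N(z) converges to P(z) uniformly on {|z| ≤ ε} as N → ∞. -/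
/-!
Expanding each logarithm in its Taylor series turns `(1/N) ∑ᵢ log (1 + cᵢ w)` into the power
series `∑ₙ (-1)ⁿ⁺¹ mₙ(N) wⁿ / n` whose coefficients are the moments `mₙ(N) = (1/N) ∑ᵢ cᵢⁿ` of the
empirical measure. Since the parameters are bounded by `C₁` and at most `C₂ N` of them are
nonzero, `|mₙ(N)| ≤ C₂ C₁ⁿ`; testing the weak convergence against a bounded continuous function
equal to `xⁿ` on `[-C₁, C₁]` shows that each `mₙ(N)` converges. By Tannery's theorem the series
then converge uniformly on every closed disc of radius `< 1/C₁`, to analytic limits. In `L_N` the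
four families are evaluated at `±z` and `±z/(1+z)`, which map a small disc into such a disc, and
the `γ` terms are fixed analytic functions times the convergent scalars `γ^±(N)/N`.
-/

open Filter MeasureTheory Metric Set Topology
open scoped BoundedContinuousFunction

theorem tendstoUniformlyOn_of_dist_le {ι α β : Type*} [PseudoMetricSpace α] {p : Filter ι}
    {F : ι → β → α} {f : β → α} {s : Set β} {D : ι → ℝ} (hD : Tendsto D p (𝓝 0))
    (hFf : ∀ N, ∀ z ∈ s, dist (f z) (F N z) ≤ D N) : TendstoUniformlyOn F f p s := by
  rw [Metric.tendstoUniformlyOn_iff]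
  intro δ hδ
  filter_upwards [hD.eventually_lt_const hδ] with N hN z hz
  exact (hFf N z hz).trans_lt hN

theorem tendstoUniformlyOn_mul_left {α 𝕜 : Type*} [NormedRing 𝕜] {c : ℕ → 𝕜} {c₀ : 𝕜}
    (hc : Tendsto c atTop (𝓝 c₀)) {f : α → 𝕜} {s : Set α} {B : ℝ} (hf : ∀ z ∈ s, ‖f z‖ ≤ B) :
    TendstoUniformlyOn (fun N z => c N * f z) (fun z => c₀ * f z) atTop s := by
  refine tendstoUniformlyOn_of_dist_le (D := fun N => ‖c₀ - c N‖ * B) ?_ fun N z hz => ?_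
  · simpa using ((tendsto_const_nhds (x := c₀)).sub hc).norm.mul_const B
  · rw [dist_eq_norm, ← sub_mul]
    exact (norm_mul_le _ _).trans (mul_le_mul_of_nonneg_left (hf z hz) (norm_nonneg _))

section PowerSeries

variable {𝕜 : Type*} [NormedField 𝕜] {M q ρ : ℝ}

theorem norm_mul_pow_le_of_le {c w : 𝕜} {n : ℕ} (hc : ‖c‖ ≤ M * q ^ n) (hw : ‖w‖ ≤ ρ) :
    ‖c * w ^ n‖ ≤ M * (q * ρ) ^ n := by
  have hM : 0 ≤ M * q ^ n := (norm_nonneg c).trans hc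
  calc ‖c * w ^ n‖ = ‖c‖ * ‖w‖ ^ n := by rw [norm_mul, norm_pow]
    _ ≤ M * q ^ n * ρ ^ n := by gcongr
    _ = M * (q * ρ) ^ n := by ring

theorem summable_mul_pow_of_le [CompleteSpace 𝕜] {c : ℕ → 𝕜} {w : 𝕜} (hq : 0 ≤ q) (hρ : 0 ≤ ρ)
    (hqρ : q * ρ < 1) (hc : ∀ n, ‖c n‖ ≤ M * q ^ n) (hw : ‖w‖ ≤ ρ) :
    Summable fun n => c n * w ^ n :=
  .of_norm_bounded ((summable_geometric_of_lt_one (by positivity) hqρ).mul_left M)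
    fun n => norm_mul_pow_le_of_le (hc n) hw

theorem tendstoUniformlyOn_tsum_mul_pow [CompleteSpace 𝕜] {a : ℕ → ℕ → 𝕜} {b : ℕ → 𝕜}
    (hq : 0 ≤ q) (hρ : 0 ≤ ρ) (hqρ : q * ρ < 1) (ha : ∀ N n, ‖a N n‖ ≤ M * q ^ n)
    (hab : ∀ n, Tendsto (fun N => a N n) atTop (𝓝 (b n))) :
    TendstoUniformlyOn (fun N w => ∑' n, a N n * w ^ n) (fun w => ∑' n, b n * w ^ n) atTop
      (closedBall 0 ρ) := by
  have hb n : ‖b n‖ ≤ M * q ^ n := le_of_tendsto' (hab n).norm (ha · n)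
  have hsub N n : ‖b n - a N n‖ ≤ (2 * M) * q ^ n := by
    linarith [norm_sub_le (b n) (a N n), ha N n, hb n]
  have hdom N n : ‖‖b n - a N n‖ * ρ ^ n‖ ≤ 2 * M * (q * ρ) ^ n := by
    rw [Real.norm_of_nonneg (by positivity), mul_pow, ← mul_assoc]
    gcongr
    exact hsub N n
  have hgeom : Summable fun n => 2 * M * (q * ρ) ^ n :=
    (summable_geometric_of_lt_one (by positivity) hqρ).mul_left _
  refine tendstoUniformlyOn_of_dist_le (D := fun N => ∑' n, ‖b n - a N n‖ * ρ ^ n) ?_ ?_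
  · have := tendsto_tsum_of_dominated_convergence hgeom
      (fun n => by simpa using ((hab n).const_sub (b n)).norm.mul_const (ρ ^ n))
      (Eventually.of_forall hdom)
    rwa [tsum_zero] at this
  · intro N w hw
    rw [mem_closedBall_zero_iff] at hw
    rw [dist_eq_norm, ← (summable_mul_pow_of_le hq hρ hqρ hb hw).tsum_sub
      (summable_mul_pow_of_le hq hρ hqρ (ha N) hw)]
    refine tsum_of_norm_bounded (hgeom.of_norm_bounded (hdom N)).hasSum fun n => ?_
    rw [← sub_mul, norm_mul, norm_pow]
    gcongr

theorem analyticOnNhd_tsum_mul_pow {b : ℕ → ℂ} (hb : ∀ n, ‖b n‖ ≤ M * q ^ n) :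
    AnalyticOnNhd ℂ (fun w => ∑' n, b n * w ^ n) (ball 0 q⁻¹) := by
  intro w hw
  rw [mem_ball_zero_iff] at hw
  have hq : 0 < q := inv_pos.mp ((norm_nonneg w).trans_lt hw)
  obtain ⟨ρ, hwρ, hρq⟩ := exists_between hw
  have hρ : 0 ≤ ρ := (norm_nonneg w).trans hwρ.le
  have hqρ : q * ρ < 1 := by simpa [hq.ne'] using mul_lt_mul_of_pos_left hρq hq
  have hd : DifferentiableOn ℂ (fun w => ∑' n, b n * w ^ n) (ball 0 ρ) :=
    Complex.differentiableOn_tsum_of_summable_norm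
      ((summable_geometric_of_lt_one (by positivity) hqρ).mul_left M)
      (fun n => ((differentiable_const _).mul (differentiable_pow n)).differentiableOn)
      isOpen_ball fun n z hz => norm_mul_pow_le_of_le (hb n) (mem_ball_zero_iff.mp hz).le
  exact hd.analyticOnNhd isOpen_ball w (mem_ball_zero_iff.mpr hwρ)

end PowerSeries

/-- The `n = 0` term is `0` only because `(0 : ℂ)⁻¹ = 0`. -/
theorem sum_log_one_add_mul_eq_tsum {ι : Type*} (s : Finset ι) (x : ι → ℂ) {w : ℂ}
    (hw : ∀ i ∈ s, ‖x i * w‖ < 1) :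
    ∑ i ∈ s, Complex.log (1 + x i * w) =
      ∑' n : ℕ, (-1) ^ (n + 1) * (∑ i ∈ s, x i ^ n) / n * w ^ n := by
  rw [← (hasSum_sum fun i hi => Complex.hasSum_taylorSeries_log (hw i hi)).tsum_eq]
  refine tsum_congr fun n => ?_
  simp only [mul_pow, Finset.mul_sum, Finset.sum_div, Finset.sum_mul]
  exact Finset.sum_congr rfl fun i _ => by ring

theorem exists_boundedContinuous_eqOn_Icc {a b : ℝ} (hab : a ≤ b) {g : ℝ → ℝ} (hg : Continuous g) :
    ∃ f : ℝ →ᵇ ℝ, EqOn f g (Icc a b) :=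
  ⟨.compContinuous (.mkOfCompact ((ContinuousMap.mk g hg).restrict (Icc a b)))
    ⟨projIcc a b hab, continuous_projIcc⟩, fun x hx => by simp [projIcc_of_mem hab hx]⟩

section Moments

variable {c : ℕ → ℕ → ℝ} {C : ℝ}

theorem exists_tendsto_inv_mul_sum_of_weak (hC : ∀ N i, |c N i| ≤ C)
    (hfin : ∀ N, {i | c N i ≠ 0}.Finite) {A : Measure ℝ}
    (hweak : ∀ f : ℝ →ᵇ ℝ, Tendsto (fun N : ℕ => (N : ℝ)⁻¹ *
      ∑' i, if c N i ≠ 0 then f (c N i) else 0) atTop (𝓝 (∫ x, f x ∂A)))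
    {g : ℝ → ℝ} (hg : Continuous g) :
    ∃ m, Tendsto (fun N : ℕ => (N : ℝ)⁻¹ * ∑ i ∈ (hfin N).toFinset, g (c N i)) atTop (𝓝 m) := by
  obtain ⟨f, hfg⟩ := exists_boundedContinuous_eqOn_Icc
    (neg_le_self ((abs_nonneg _).trans (hC 0 0))) hg
  refine ⟨_, (hweak f).congr fun N => ?_⟩
  rw [tsum_eq_sum (s := (hfin N).toFinset) fun i hi => by simp_all]
  refine congrArg _ (Finset.sum_congr rfl fun i hi => ?_)
  rw [if_pos (show c N i ≠ 0 from (hfin N).mem_toFinset.mp hi), hfg (abs_le.mp (hC N i))]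

theorem abs_inv_mul_sum_pow_le {C₂ : ℝ} (hC : ∀ N i, |c N i| ≤ C)
    (hfin : ∀ N, {i | c N i ≠ 0}.Finite)
    (hcard : ∀ N : ℕ, (Nat.card {i | c N i ≠ 0} : ℝ) ≤ C₂ * N) (N n : ℕ) :
    |(N : ℝ)⁻¹ * ∑ i ∈ (hfin N).toFinset, c N i ^ n| ≤ C₂ * C ^ n := by
  have hC0 : 0 ≤ C := (abs_nonneg _).trans (hC 0 0)
  have hC₂ : 0 ≤ C₂ := by simpa using (Nat.cast_nonneg _).trans (hcard 1)
  rcases N.eq_zero_or_pos with rfl | hN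
  · simpa using mul_nonneg hC₂ (pow_nonneg hC0 n)
  have hsum : |∑ i ∈ (hfin N).toFinset, c N i ^ n| ≤ (hfin N).toFinset.card * C ^ n :=
    (Finset.abs_sum_le_sum_abs _ _).trans <| by
      simpa using Finset.sum_le_card_nsmul (hfin N).toFinset _ _ fun i _ =>
        pow_le_pow_left₀ (abs_nonneg _) (hC N i) n
  rw [← Nat.card_eq_card_finite_toFinset] at hsum
  calc |(N : ℝ)⁻¹ * ∑ i ∈ (hfin N).toFinset, c N i ^ n|
      ≤ (N : ℝ)⁻¹ * (C₂ * N * C ^ n) := by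
        rw [abs_mul, abs_inv, Nat.abs_cast]
        gcongr
        exact hsum.trans (by gcongr; exact hcard N)
    _ = C₂ * C ^ n := by field_simp

end Moments

def HasAnalyticUniformLimitOn (F : ℕ → ℂ → ℂ) (s : Set ℂ) : Prop :=
  ∃ P : ℂ → ℂ, AnalyticOnNhd ℂ P s ∧ TendstoUniformlyOn F P atTop s

namespace HasAnalyticUniformLimitOn

variable {F G : ℕ → ℂ → ℂ} {s t : Set ℂ}

theorem add (hF : HasAnalyticUniformLimitOn F s) (hG : HasAnalyticUniformLimitOn G s) :
    HasAnalyticUniformLimitOn (fun N z => F N z + G N z) s :=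
  let ⟨P, hP, hFP⟩ := hF
  let ⟨Q, hQ, hGQ⟩ := hG
  ⟨P + Q, hP.add hQ, hFP.add hGQ⟩

theorem sub (hF : HasAnalyticUniformLimitOn F s) (hG : HasAnalyticUniformLimitOn G s) :
    HasAnalyticUniformLimitOn (fun N z => F N z - G N z) s :=
  let ⟨P, hP, hFP⟩ := hF
  let ⟨Q, hQ, hGQ⟩ := hG
  ⟨P - Q, hP.sub hQ, hFP.sub hGQ⟩

theorem comp (hF : HasAnalyticUniformLimitOn F t) {φ : ℂ → ℂ} (hφ : AnalyticOnNhd ℂ φ s)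
    (hst : MapsTo φ s t) : HasAnalyticUniformLimitOn (fun N z => F N (φ z)) s :=
  let ⟨P, hP, hFP⟩ := hF
  ⟨P ∘ φ, hP.comp hφ hst, (hFP.comp φ).mono hst⟩

theorem congr (hF : HasAnalyticUniformLimitOn F s) (hFG : ∀ N, EqOn (F N) (G N) s) :
    HasAnalyticUniformLimitOn G s :=
  let ⟨P, hP, hFP⟩ := hF
  ⟨P, hP, hFP.congr (Eventually.of_forall hFG)⟩

end HasAnalyticUniformLimitOn

theorem hasAnalyticUniformLimitOn_mul_left {c : ℕ → ℂ} {c₀ : ℂ} (hc : Tendsto c atTop (𝓝 c₀))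
    {f : ℂ → ℂ} {s : Set ℂ} (hs : IsCompact s) (hf : AnalyticOnNhd ℂ f s) :
    HasAnalyticUniformLimitOn (fun N z => c N * f z) s :=
  let ⟨_, hB⟩ := hs.exists_bound_of_continuousOn hf.continuousOn
  ⟨fun z => c₀ * f z, analyticOnNhd_const.mul hf, tendstoUniformlyOn_mul_left hc hB⟩

noncomputable def normalizedLogSum (c : ℕ → ℕ → ℝ) (N : ℕ) (w : ℂ) : ℂ :=
  (N : ℂ)⁻¹ * ∑' i, Complex.log (1 + c N i * w)

theorem normalizedLogSum_eq_tsum {c : ℕ → ℕ → ℝ} {N : ℕ} (hfin : {i | c N i ≠ 0}.Finite) {w : ℂ}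
    (hw : ∀ i, ‖(c N i : ℂ) * w‖ < 1) :
    normalizedLogSum c N w = ∑' n : ℕ,
      (-1) ^ (n + 1) * (((N : ℝ)⁻¹ * ∑ i ∈ hfin.toFinset, c N i ^ n : ℝ) : ℂ) / n * w ^ n := by
  rw [normalizedLogSum, tsum_eq_sum (s := hfin.toFinset) fun i hi => by simp_all,
    sum_log_one_add_mul_eq_tsum _ _ fun i _ => hw i, ← tsum_mul_left]
  refine tsum_congr fun n => ?_
  push_cast
  ring

theorem hasAnalyticUniformLimitOn_normalizedLogSum {c : ℕ → ℕ → ℝ} {C₁ C₂ ρ : ℝ}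
    (hC₁ : ∀ N i, |c N i| ≤ C₁) (hfin : ∀ N, {i | c N i ≠ 0}.Finite)
    (hcard : ∀ N : ℕ, (Nat.card {i | c N i ≠ 0} : ℝ) ≤ C₂ * N) {A : Measure ℝ}
    (hweak : ∀ f : ℝ →ᵇ ℝ, Tendsto (fun N : ℕ => (N : ℝ)⁻¹ *
      ∑' i, if c N i ≠ 0 then f (c N i) else 0) atTop (𝓝 (∫ x, f x ∂A)))
    (hρ : 0 ≤ ρ) (hρC₁ : ρ < C₁⁻¹) :
    HasAnalyticUniformLimitOn (normalizedLogSum c) (closedBall 0 ρ) := by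
  have hC₁0 : 0 < C₁ := inv_pos.mp (hρ.trans_lt hρC₁)
  have hC₁ρ : C₁ * ρ < 1 := by simpa [hC₁0.ne'] using mul_lt_mul_of_pos_left hρC₁ hC₁0
  set m : ℕ → ℕ → ℝ := fun N n => (N : ℝ)⁻¹ * ∑ i ∈ (hfin N).toFinset, c N i ^ n
  choose μ hμ using fun n => exists_tendsto_inv_mul_sum_of_weak hC₁ hfin hweak (continuous_pow n)
  set a : ℕ → ℕ → ℂ := fun N n => (-1) ^ (n + 1) * (m N n : ℂ) / n
  set b : ℕ → ℂ := fun n => (-1) ^ (n + 1) * (μ n : ℂ) / n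
  have ha N n : ‖a N n‖ ≤ C₂ * C₁ ^ n := by
    refine le_trans ?_ (abs_inv_mul_sum_pow_le hC₁ hfin hcard N n)
    change ‖(-1) ^ (n + 1) * (m N n : ℂ) / n‖ ≤ |m N n|
    rcases n.eq_zero_or_pos with rfl | hn
    · simp
    · simpa [norm_div] using div_le_self (abs_nonneg (m N n)) (Nat.one_le_cast.mpr hn)
  have hab n : Tendsto (a · n) atTop (𝓝 (b n)) :=
    (((Complex.continuous_ofReal.tendsto _).comp (hμ n)).const_mul _).div_const _
  refine ⟨fun w => ∑' n, b n * w ^ n,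
    (analyticOnNhd_tsum_mul_pow fun n => le_of_tendsto' (hab n).norm (ha · n)).mono
      (closedBall_subset_ball hρC₁),
    (tendstoUniformlyOn_tsum_mul_pow hC₁0.le hρ hC₁ρ ha hab).congr
      (Eventually.of_forall fun N w hw => (normalizedLogSum_eq_tsum (hfin N) fun i => ?_).symm)⟩
  rw [norm_mul, Complex.norm_real]
  exact (mul_le_mul (hC₁ N i) (mem_closedBall_zero_iff.mp hw) (norm_nonneg w) hC₁0.le).trans_lt
    hC₁ρ

theorem half_le_norm_one_add {z : ℂ} (hz : ‖z‖ ≤ 1 / 2) : 1 / 2 ≤ ‖1 + z‖ := by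
  have := norm_sub_norm_le (1 : ℂ) (-z)
  rw [norm_one, norm_neg, sub_neg_eq_add] at this
  linarith

theorem mapsTo_div_one_add_closedBall {ε : ℝ} (hε : ε ≤ 1 / 2) :
    MapsTo (fun z : ℂ => z / (1 + z)) (closedBall 0 ε) (closedBall 0 (2 * ε)) := by
  intro z hz
  rw [mem_closedBall_zero_iff] at hz ⊢
  have h1 := half_le_norm_one_add (hz.trans hε)
  rw [norm_div, div_le_iff₀ (by linarith)]
  nlinarith [norm_nonneg z]

theorem hasAnalyticUniformLimitOn_logVoiculescu {αp αm βp βm : ℕ → ℕ → ℝ} {γp γm : ℕ → ℝ}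
    {gp gm ε : ℝ} (hgp : Tendsto (fun N => γp N / N) atTop (𝓝 gp))
    (hgm : Tendsto (fun N => γm N / N) atTop (𝓝 gm)) (hε0 : 0 ≤ ε) (hε : ε ≤ 1 / 2)
    (hαp : HasAnalyticUniformLimitOn (normalizedLogSum αp) (closedBall 0 (2 * ε)))
    (hαm : HasAnalyticUniformLimitOn (normalizedLogSum αm) (closedBall 0 (2 * ε)))
    (hβp : HasAnalyticUniformLimitOn (normalizedLogSum βp) (closedBall 0 (2 * ε)))
    (hβm : HasAnalyticUniformLimitOn (normalizedLogSum βm) (closedBall 0 (2 * ε))) :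
    HasAnalyticUniformLimitOn (fun (N : ℕ) (z : ℂ) => (N : ℂ)⁻¹ *
      ((γp N : ℂ) * z + (γm N : ℂ) * (1 / (z + 1) - 1)
        + ∑' i, Complex.log (1 + (βp N i : ℂ) * z)
        - ∑' i, Complex.log (1 - (αp N i : ℂ) * z)
        + ∑' i, Complex.log (1 - (βm N i : ℂ) * z / (1 + z))
        - ∑' i, Complex.log (1 + (αm N i : ℂ) * z / (1 + z)))) (closedBall 0 ε) := by
  have hne z (hz : z ∈ closedBall (0 : ℂ) ε) : 1 + z ≠ 0 := norm_pos_iff.mp <| by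
    linarith [half_le_norm_one_add ((mem_closedBall_zero_iff.mp hz).trans hε)]
  have hmob : AnalyticOnNhd ℂ (fun z : ℂ => z / (1 + z)) (closedBall 0 ε) := fun z hz => by
    fun_prop (disch := exact hne z hz)
  have hmob' : AnalyticOnNhd ℂ (fun z : ℂ => 1 / (z + 1) - 1) (closedBall 0 ε) := fun z hz => by
    fun_prop (disch := rw [add_comm]; exact hne z hz)
  have hmaps := mapsTo_div_one_add_closedBall hε
  have hsub : closedBall (0 : ℂ) ε ⊆ closedBall 0 (2 * ε) :=
    closedBall_subset_closedBall (by linarith)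
  have hγ {γ : ℕ → ℝ} {g : ℝ} (hγg : Tendsto (fun N => γ N / N) atTop (𝓝 g)) :
      Tendsto (fun N => ((γ N / N : ℝ) : ℂ)) atTop (𝓝 (g : ℂ)) :=
    (Complex.continuous_ofReal.tendsto g).comp hγg
  have hcpt := isCompact_closedBall (0 : ℂ) ε
  refine .congr ((((((hasAnalyticUniformLimitOn_mul_left (hγ hgp) hcpt analyticOnNhd_id).add
    (hasAnalyticUniformLimitOn_mul_left (hγ hgm) hcpt hmob')).add
    (hβp.comp analyticOnNhd_id hsub)).sub
    (hαp.comp analyticOnNhd_id.neg fun z hz => by simpa using hsub hz)).add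
    (hβm.comp hmob.neg fun z hz => by simpa using hmaps hz)).sub
    (hαm.comp hmob hmaps)) fun N z _ => ?_
  simp only [normalizedLogSum, Pi.neg_apply, mul_neg, ← sub_eq_add_neg, mul_div_assoc]
  push_cast
  ring

theorem log_voiculescu_converges_uniformly_general
    (αp αm βp βm : ℕ → ℕ → ℝ) (γp γm : ℕ → ℝ)
    -- ω(N) ∈ Ω : nonincreasing summable sequences of nonnegative reals, etc.
    (hαp0 : ∀ N i, 0 ≤ αp N i) (hαm0 : ∀ N i, 0 ≤ αm N i)
    (hβp0 : ∀ N i, 0 ≤ βp N i) (hβm0 : ∀ N i, 0 ≤ βm N i)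
    -- (a) convergence of γ^±(N)/N
    (ha : (∃ gp : ℝ, Tendsto (fun N => γp N / N) atTop (nhds gp)) ∧
          (∃ gm : ℝ, Tendsto (fun N => γm N / N) atTop (nhds gm)))
    -- (b) weak convergence of the empirical measures of the nonzero parameters
    -- to finite compactly supported limit measures
    (hb : ∀ c ∈ [αp, αm, βp, βm], ∃ A : Measure ℝ, IsFiniteMeasure A ∧
      (∃ K : Set ℝ, IsCompact K ∧ A Kᶜ = 0) ∧
      ∀ f : BoundedContinuousFunction ℝ ℝ,
        Tendsto (fun (N : ℕ) => (N : ℝ)⁻¹ * ∑' i, if c N i ≠ 0 then f (c N i) else 0)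
          atTop (nhds (∫ x, f x ∂A)))
    -- (c) uniform bound on the parameters
    (hc : ∃ C₁ : ℝ, 0 < C₁ ∧ ∀ c ∈ [αp, αm, βp, βm], ∀ N i, c N i < C₁)
    -- (d) at most C₂ N nonzero parameters
    (hfin : ∀ c ∈ [αp, αm, βp, βm], ∀ N, {i | c N i ≠ 0}.Finite)
    (hd : ∃ C₂ : ℝ, 0 < C₂ ∧ ∀ N,
      (Nat.card {i | αp N i ≠ 0} + Nat.card {i | αm N i ≠ 0} +
        Nat.card {i | βp N i ≠ 0} + Nat.card {i | βm N i ≠ 0} : ℝ) ≤ C₂ * N) :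
    ∃ ε : ℝ, 0 < ε ∧ ∃ P : ℂ → ℂ,
      AnalyticOnNhd ℂ P (Metric.closedBall 0 ε) ∧
      TendstoUniformlyOn
        (fun (N : ℕ) (z : ℂ) => (N : ℂ)⁻¹ *
          ((γp N : ℂ) * z + (γm N : ℂ) * (1 / (z + 1) - 1)
            + ∑' i, Complex.log (1 + (βp N i : ℂ) * z)
            - ∑' i, Complex.log (1 - (αp N i : ℂ) * z)
            + ∑' i, Complex.log (1 - (βm N i : ℂ) * z / (1 + z))
            - ∑' i, Complex.log (1 + (αm N i : ℂ) * z / (1 + z))))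
        P atTop (Metric.closedBall 0 ε) := by
  obtain ⟨C₁, hC₁, hltC₁⟩ := hc
  obtain ⟨C₂, -, hC₂⟩ := hd
  obtain ⟨⟨gp, hgp⟩, ⟨gm, hgm⟩⟩ := ha
  set ε := min (1 / 2) (C₁⁻¹ / 4)
  have h2ε : 2 * ε < C₁⁻¹ := by linarith [min_le_right (1 / 2) (C₁⁻¹ / 4), inv_pos.mpr hC₁]
  have hfamily : ∀ c ∈ [αp, αm, βp, βm],
      HasAnalyticUniformLimitOn (normalizedLogSum c) (closedBall 0 (2 * ε)) := by
    intro c hc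
    obtain ⟨A, -, -, hA⟩ := hb c hc
    have hcard (c' : ℕ → ℕ → ℝ) (N : ℕ) : (0 : ℝ) ≤ Nat.card {i | c' N i ≠ 0} := Nat.cast_nonneg _
    refine hasAnalyticUniformLimitOn_normalizedLogSum (C₂ := C₂)
      (fun N i => abs_le.mpr ⟨?_, (hltC₁ c hc N i).le⟩) (hfin c hc) (fun N => ?_) hA
      (by positivity) h2ε <;>
      simp only [List.mem_cons, List.not_mem_nil, or_false] at hc <;>
      rcases hc with hc | hc | hc | hc <;> subst c
    all_goals first
      | linarith [hαp0 N i, hαm0 N i, hβp0 N i, hβm0 N i]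
      | linarith [hC₂ N, hcard αp N, hcard αm N, hcard βp N, hcard βm N]
  obtain ⟨P, hP, hconv⟩ := hasAnalyticUniformLimitOn_logVoiculescu hgp hgm (by positivity)
    (min_le_left _ _) (hfamily αp (by simp)) (hfamily αm (by simp)) (hfamily βp (by simp))
    (hfamily βm (by simp))
  exact ⟨ε, by positivity, P, hP, hconv⟩

/-- Under the "sufficient condition" on the sequences of Voiculescu
parameters `ω(N) = (α^±(N), β^±(N), γ^±(N))` — convergence of `γ^±(N)/N`, weak
convergence of the empirical measures of the parameters to finite compactly supported
measures, uniform boundedness, and at most `C₂ N` nonzero parameters — the functions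
`(1/N) L_N(z) = (1/N) log Φ^{ω(N)}(z+1)` converge uniformly on some closed disc
`{|z| ≤ ε}` to a function analytic there. -/
theorem log_voiculescu_converges_uniformly
    (αp αm βp βm : ℕ → ℕ → ℝ) (γp γm : ℕ → ℝ)
    -- ω(N) ∈ Ω : nonincreasing summable sequences of nonnegative reals, etc.
    (hαp0 : ∀ N i, 0 ≤ αp N i) (hαm0 : ∀ N i, 0 ≤ αm N i)
    (hβp0 : ∀ N i, 0 ≤ βp N i) (hβm0 : ∀ N i, 0 ≤ βm N i)
    (hαpd : ∀ N i, αp N (i + 1) ≤ αp N i) (hαmd : ∀ N i, αm N (i + 1) ≤ αm N i)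
    (hβpd : ∀ N i, βp N (i + 1) ≤ βp N i) (hβmd : ∀ N i, βm N (i + 1) ≤ βm N i)
    (hαps : ∀ N, Summable (αp N)) (hαms : ∀ N, Summable (αm N))
    (hβps : ∀ N, Summable (βp N)) (hβms : ∀ N, Summable (βm N))
    (hβ1 : ∀ N, βp N 0 + βm N 0 ≤ 1)
    (hγp0 : ∀ N, 0 ≤ γp N) (hγm0 : ∀ N, 0 ≤ γm N)
    -- (a) convergence of γ^±(N)/N
    (ha : (∃ gp : ℝ, Tendsto (fun N => γp N / N) atTop (nhds gp)) ∧
          (∃ gm : ℝ, Tendsto (fun N => γm N / N) atTop (nhds gm)))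
    -- (b) weak convergence of the empirical measures of the nonzero parameters
    -- to finite compactly supported limit measures
    (hb : ∀ c ∈ [αp, αm, βp, βm], ∃ A : Measure ℝ, IsFiniteMeasure A ∧
      (∃ K : Set ℝ, IsCompact K ∧ A Kᶜ = 0) ∧
      ∀ f : BoundedContinuousFunction ℝ ℝ,
        Tendsto (fun (N : ℕ) => (N : ℝ)⁻¹ * ∑' i, if c N i ≠ 0 then f (c N i) else 0)
          atTop (nhds (∫ x, f x ∂A)))
    -- (c) uniform bound on the parameters
    (hc : ∃ C₁ : ℝ, 0 < C₁ ∧ ∀ c ∈ [αp, αm, βp, βm], ∀ N i, c N i < C₁)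
    -- (d) at most C₂ N nonzero parameters
    (hfin : ∀ c ∈ [αp, αm, βp, βm], ∀ N, {i | c N i ≠ 0}.Finite)
    (hd : ∃ C₂ : ℝ, 0 < C₂ ∧ ∀ N,
      (Nat.card {i | αp N i ≠ 0} + Nat.card {i | αm N i ≠ 0} +
        Nat.card {i | βp N i ≠ 0} + Nat.card {i | βm N i ≠ 0} : ℝ) ≤ C₂ * N) :
    ∃ ε : ℝ, 0 < ε ∧ ∃ P : ℂ → ℂ,
      AnalyticOnNhd ℂ P (Metric.closedBall 0 ε) ∧
      TendstoUniformlyOn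
        (fun (N : ℕ) (z : ℂ) => (N : ℂ)⁻¹ *
          ((γp N : ℂ) * z + (γm N : ℂ) * (1 / (z + 1) - 1)
            + ∑' i, Complex.log (1 + (βp N i : ℂ) * z)
            - ∑' i, Complex.log (1 - (αp N i : ℂ) * z)
            + ∑' i, Complex.log (1 - (βm N i : ℂ) * z / (1 + z))
            - ∑' i, Complex.log (1 + (αm N i : ℂ) * z / (1 + z))))
        P atTop (Metric.closedBall 0 ε) :=
  log_voiculescu_converges_uniformly_general αp αm βp βm γp γm hαp0 hαm0 hβp0 hβm0 ha hb hc hfin hd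
end

section
/- Let (t_k)_{k≥1} be real numbers and C > 0 a constant with |t_k| ≤ C^k for all k ≥ 1. In the ring ℝ[[z]] of formal power series, set Q(z) := 1 + z(1+z)(t_1 + t_2 z + t_3 z^2 + ⋯), let v_0(z) := (z/Q(z))^{(−1)} be the compositional inverse of z/Q(z), and let m_k denote the coefficient of z^{k+1} in log(1 + v_0(z)). Then there exists a constant C_1 > 0 such that |m_k| < C_1^k for all k ≥ 1. -/
/-!
Since `z/Q(z)` has linear coefficient `1`, its left inverse `v₀` is also its right inverse, which
turns into the Lagrange fixed-point equation `v₀ = z · Q(v₀)`. Comparing coefficients expresses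
`[z^(n+1)] v₀` through `[z^n] v₀^m`, `m ≤ n`, and an induction shows `|[z^n] v₀| ≤ c Mⁿ / n²`
with `M = 16 · 2 max(C, 1)`, `c = 1/M`: the weights `Mⁿ / n²` are closed under convolution up to
a factor `8`, because `∑_{i+j=n} 1/(i² j²) ≤ 8/n²`. Hence `|[z^n] v₀^m| ≤ Mⁿ` for all `m`, and the
logarithm, whose coefficients are at most `1` in absolute value, has `|m_k| ≤ (k+2) M^(k+1)`.
-/

open PowerSeries

/-- Composition `f(g)` of formal power series; this gives the usual composition
whenever `g` has zero constant term (then `coeff n (g^m) = 0` for `m > n`). -/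
noncomputable def psComp (f g : PowerSeries ℝ) : PowerSeries ℝ :=
  PowerSeries.mk fun n =>
    ∑ m ∈ Finset.range (n + 1), (PowerSeries.coeff m f) * (PowerSeries.coeff n (g ^ m))

/-- The series `log(1+v) = v - v²/2 + v³/3 - ⋯`, i.e. the composition of
`L(z) = ∑_{n≥1} (-1)^{n+1} z^n / n` with `v`. -/
noncomputable def psLogOneAdd (v : PowerSeries ℝ) : PowerSeries ℝ :=
  psComp (PowerSeries.mk fun n => if n = 0 then 0 else (-1) ^ (n + 1) / n) v

open Finset

lemma coeff_psComp (f g : ℝ⟦X⟧) (n : ℕ) :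
    coeff n (psComp f g) = ∑ m ∈ range (n + 1), coeff m f * coeff n (g ^ m) :=
  coeff_mk _ _

lemma coeff_pow_eq_zero_of_lt {R : Type*} [Semiring R] {g : R⟦X⟧} (hg : constantCoeff g = 0)
    {m n : ℕ} (h : n < m) : coeff n (g ^ m) = 0 :=
  coeff_of_lt_order _ ((Nat.cast_lt.mpr h).trans_le (le_order_pow_of_constantCoeff_eq_zero m hg))

lemma psComp_eq_subst (f : ℝ⟦X⟧) {g : ℝ⟦X⟧} (hg : constantCoeff g = 0) :
    psComp f g = f.subst g := by
  ext n
  rw [coeff_psComp, coeff_subst' (HasSubst.of_constantCoeff_zero' hg)]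
  refine (finsum_eq_sum_of_support_subset _ fun m hm => ?_).symm
  by_contra hmn
  simp only [coe_range, Set.mem_Iio, not_lt] at hmn
  exact hm (by simp [coeff_pow_eq_zero_of_lt hg (Nat.lt_of_succ_le hmn)])

lemma eq_substInvOfIsUnit_of_subst_eq_X {R : Type*} [CommRing R] {P v : R⟦X⟧}
    (hP : constantCoeff P = 0) (hP' : IsUnit (coeff 1 P)) (h : v.subst P = X) :
    v = P.substInvOfIsUnit hP' := by
  have hG := HasSubst.substInvOfIsUnit P hP'
  calc v = v.subst (P.subst (P.substInvOfIsUnit hP')) := by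
        rw [subst_substInvOfIsUnit_right P hP hP', X_subst]
    _ = P.substInvOfIsUnit hP' := by
        rw [← subst_comp_subst_apply (HasSubst.of_constantCoeff_zero' hP) hG, h, subst_X hG]

lemma eq_X_mul_psComp_of_psComp_X_mul_inv_eq_X {Q v : ℝ⟦X⟧} (hQ : constantCoeff Q ≠ 0)
    (h : psComp v (X * Q⁻¹) = X) : v = X * psComp Q v := by
  set F : ℝ⟦X⟧ := X * Q⁻¹
  have hF0 : constantCoeff F = 0 := by simp [F]
  have hF1 : IsUnit (coeff 1 F) := by simpa [F] using hQ
  have hvG := eq_substInvOfIsUnit_of_subst_eq_X hF0 hF1 (by rwa [← psComp_eq_subst _ hF0])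
  have hv0 : constantCoeff v = 0 := by rw [hvG]; exact constantCoeff_substInvOfIsUnit F hF1
  have hv := HasSubst.of_constantCoeff_zero' hv0
  have hFv : F.subst v = X := by rw [hvG]; exact subst_substInvOfIsUnit_right F hF0 hF1
  have hunit : (Q⁻¹).subst v * Q.subst v = 1 := by
    rw [← subst_mul hv, PowerSeries.inv_mul_cancel Q hQ, ← coe_substAlgHom hv, map_one]
  rw [psComp_eq_subst _ hv0]
  calc v = v * ((Q⁻¹).subst v * Q.subst v) := by rw [hunit, mul_one]
    _ = F.subst v * Q.subst v := by rw [subst_mul hv, subst_X hv, mul_assoc]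
    _ = X * Q.subst v := by rw [hFv]

lemma sum_range_inv_sq_le_two (N : ℕ) : ∑ i ∈ range N, ((i : ℝ) ^ 2)⁻¹ ≤ 2 := by
  calc ∑ i ∈ range N, ((i : ℝ) ^ 2)⁻¹ ≤ ∑ i ∈ insert 0 (Ioo 0 N), ((i : ℝ) ^ 2)⁻¹ := by
        refine sum_le_sum_of_subset_of_nonneg (fun i hi => ?_) fun _ _ _ => by positivity
        rw [mem_range] at hi
        rcases Nat.eq_zero_or_pos i with rfl | hi0
        · exact mem_insert_self _ _
        · exact mem_insert_of_mem (mem_Ioo.mpr ⟨hi0, hi⟩)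
    _ ≤ 2 := by
        rw [sum_insert (by simp)]
        simpa using sum_Ioo_inv_sq_le (α := ℝ) 0 N

lemma inv_sq_mul_inv_sq_le {a b : ℝ} (ha : 0 ≤ a) (hb : 0 ≤ b) :
    (a ^ 2)⁻¹ * (b ^ 2)⁻¹ ≤ 2 * ((a ^ 2)⁻¹ + (b ^ 2)⁻¹) / (a + b) ^ 2 := by
  rcases ha.eq_or_lt with rfl | ha
  · simp; positivity
  rcases hb.eq_or_lt with rfl | hb
  · simp; positivity
  rw [le_div_iff₀ (by positivity)]
  field_simp
  nlinarith [sq_nonneg (a - b), mul_pos ha hb]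

lemma sum_antidiagonal_inv_sq_mul_inv_sq_le (N : ℕ) :
    ∑ p ∈ antidiagonal N, ((p.1 : ℝ) ^ 2)⁻¹ * ((p.2 : ℝ) ^ 2)⁻¹ ≤ 8 / (N : ℝ) ^ 2 := by
  have h₁ : ∑ p ∈ antidiagonal N, ((p.1 : ℝ) ^ 2)⁻¹ ≤ 2 := by
    rw [Nat.sum_antidiagonal_eq_sum_range_succ_mk]
    exact sum_range_inv_sq_le_two _
  have h₂ : ∑ p ∈ antidiagonal N, ((p.2 : ℝ) ^ 2)⁻¹ ≤ 2 := by
    rw [← Nat.sum_antidiagonal_swap]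
    simpa using h₁
  calc ∑ p ∈ antidiagonal N, ((p.1 : ℝ) ^ 2)⁻¹ * ((p.2 : ℝ) ^ 2)⁻¹
      ≤ ∑ p ∈ antidiagonal N, 2 * (((p.1 : ℝ) ^ 2)⁻¹ + ((p.2 : ℝ) ^ 2)⁻¹) / (N : ℝ) ^ 2 :=
        sum_le_sum fun p hp => by
          simpa [← mem_antidiagonal.mp hp] using
            inv_sq_mul_inv_sq_le (Nat.cast_nonneg p.1) (Nat.cast_nonneg p.2)
    _ = 2 * (∑ p ∈ antidiagonal N, ((p.1 : ℝ) ^ 2)⁻¹ + ∑ p ∈ antidiagonal N, ((p.2 : ℝ) ^ 2)⁻¹)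
          / (N : ℝ) ^ 2 := by
        rw [← sum_div, ← mul_sum, sum_add_distrib]
    _ ≤ 2 * (2 + 2) / (N : ℝ) ^ 2 := by gcongr
    _ = 8 / (N : ℝ) ^ 2 := by ring

-- At `j = 0` the bound in `hw` is `0` (division by zero), so `hw` forces `coeff 0 w = 0`.
lemma abs_coeff_pow_succ_le {w : ℝ⟦X⟧} {c M : ℝ} (hc : 0 ≤ c) (hM : 0 ≤ M) {N : ℕ}
    (hw : ∀ j ≤ N, |coeff j w| ≤ c * M ^ j / (j : ℝ) ^ 2) (m : ℕ) {n : ℕ} (hn : n ≤ N) :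
    |coeff n (w ^ (m + 1))| ≤ c ^ (m + 1) * 8 ^ m * M ^ n / (n : ℝ) ^ 2 := by
  induction m generalizing n with
  | zero => simpa using hw n hn
  | succ m ih =>
    rw [pow_succ', coeff_mul]
    calc |∑ p ∈ antidiagonal n, coeff p.1 w * coeff p.2 (w ^ (m + 1))|
        ≤ ∑ p ∈ antidiagonal n, c * M ^ p.1 / (p.1 : ℝ) ^ 2 *
            (c ^ (m + 1) * 8 ^ m * M ^ p.2 / (p.2 : ℝ) ^ 2) := by
          refine (abs_sum_le_sum_abs _ _).trans (sum_le_sum fun p hp => ?_)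
          have hp := mem_antidiagonal.mp hp
          rw [abs_mul]
          exact mul_le_mul (hw _ (by omega)) (ih (by omega)) (abs_nonneg _) (by positivity)
      _ = c ^ (m + 2) * 8 ^ m * M ^ n *
            ∑ p ∈ antidiagonal n, ((p.1 : ℝ) ^ 2)⁻¹ * ((p.2 : ℝ) ^ 2)⁻¹ := by
          rw [mul_sum]
          refine sum_congr rfl fun p hp => ?_
          rw [← mem_antidiagonal.mp hp, pow_add]
          ring
      _ ≤ c ^ (m + 2) * 8 ^ m * M ^ n * (8 / (n : ℝ) ^ 2) := by
          gcongr
          exact sum_antidiagonal_inv_sq_mul_inv_sq_le n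
      _ = c ^ (m + 1 + 1) * 8 ^ (m + 1) * M ^ n / (n : ℝ) ^ 2 := by ring

lemma abs_coeff_le_of_eq_X_mul_psComp {Q v : ℝ⟦X⟧} {B : ℝ} (hB : 0 < B)
    (hQ : ∀ m, |coeff m Q| ≤ B ^ m) (hv : v = X * psComp Q v) (n : ℕ) :
    |coeff n v| ≤ (16 * B)⁻¹ * (16 * B) ^ n / (n : ℝ) ^ 2 := by
  set M := 16 * B with hM
  have hcM : M⁻¹ * M = 1 := inv_mul_cancel₀ (by positivity)
  induction n using Nat.strong_induction_on with
  | _ n ih =>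
  match n with
  | 0 => rw [hv]; simp
  | 1 =>
    rw [hv, coeff_succ_X_mul, coeff_psComp]
    simpa [hcM] using hQ 0
  | d + 2 =>
    have hpow := abs_coeff_pow_succ_le (inv_nonneg.mpr (by positivity)) (by positivity)
      (fun j hj => ih j (by omega)) (N := d + 1)
    rw [hv, coeff_succ_X_mul, coeff_psComp, sum_range_succ']
    simp only [pow_zero, coeff_one, Nat.add_one_ne_zero, if_false, mul_zero, add_zero]
    calc |∑ m ∈ range (d + 1), coeff (m + 1) Q * coeff (d + 1) (v ^ (m + 1))|
        ≤ ∑ m ∈ range (d + 1), B ^ (m + 1) *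
            (M⁻¹ ^ (m + 1) * 8 ^ m * M ^ (d + 1) / ((d + 1 : ℕ) : ℝ) ^ 2) := by
          refine (abs_sum_le_sum_abs _ _).trans (sum_le_sum fun m _ => ?_)
          rw [abs_mul]
          exact mul_le_mul (hQ _) (hpow m le_rfl) (abs_nonneg _) (by positivity)
      _ = M ^ (d + 1) / (16 * ((d + 1 : ℕ) : ℝ) ^ 2) * ∑ m ∈ range (d + 1), (1 / 2 : ℝ) ^ m := by
          rw [mul_sum]
          refine sum_congr rfl fun m _ => ?_
          have hBM : B * M⁻¹ = 1 / 16 := by rw [hM]; field_simp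
          have hcoef : B ^ (m + 1) * M⁻¹ ^ (m + 1) * 8 ^ m = 1 / 16 * (1 / 2) ^ m := by
            rw [← mul_pow, hBM, pow_succ', mul_assoc, ← mul_pow]
            norm_num
          linear_combination M ^ (d + 1) / ((d + 1 : ℕ) : ℝ) ^ 2 * hcoef
      _ ≤ M ^ (d + 1) / (16 * ((d + 1 : ℕ) : ℝ) ^ 2) * 2 := by
          gcongr
          simpa using sum_geometric_two_le (d + 1)
      _ = M ^ (d + 1) / (8 * ((d + 1 : ℕ) : ℝ) ^ 2) := by ring
      _ ≤ M ^ (d + 1) / ((d + 2 : ℕ) : ℝ) ^ 2 := by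
          gcongr
          push_cast
          nlinarith [(Nat.cast_nonneg d : (0 : ℝ) ≤ d)]
      _ = M⁻¹ * M ^ (d + 2) / ((d + 2 : ℕ) : ℝ) ^ 2 := by
          rw [pow_succ' M (d + 1), ← mul_assoc, hcM, one_mul]

lemma abs_coeff_pow_le_pow {w : ℝ⟦X⟧} {M : ℝ} (hM : 8 ≤ M)
    (hw : ∀ n, |coeff n w| ≤ M⁻¹ * M ^ n / (n : ℝ) ^ 2) (m n : ℕ) :
    |coeff n (w ^ m)| ≤ M ^ n := by
  have hM0 : 0 < M := by linarith
  cases m with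
  | zero =>
    rw [pow_zero, coeff_one]
    split_ifs with hn
    · simp [hn]
    · simpa using pow_nonneg hM0.le n
  | succ k =>
    refine (abs_coeff_pow_succ_le (by positivity) hM0.le (fun j _ => hw j) k le_rfl).trans ?_
    have hc : M⁻¹ ^ (k + 1) * 8 ^ k ≤ 1 := by
      rw [pow_succ', mul_assoc, ← mul_pow]
      refine mul_le_one₀ (inv_le_one_of_one_le₀ (by linarith)) (by positivity)
        (pow_le_one₀ (by positivity) ?_)
      rw [inv_mul_le_iff₀ hM0]
      linarith
    calc M⁻¹ ^ (k + 1) * 8 ^ k * M ^ n / (n : ℝ) ^ 2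
        = M⁻¹ ^ (k + 1) * 8 ^ k * M ^ n * ((n ^ 2 : ℕ) : ℝ)⁻¹ := by push_cast; ring
      _ ≤ 1 * M ^ n * 1 := by
          gcongr
          exact Nat.cast_inv_le_one _
      _ = M ^ n := by ring

lemma abs_coeff_psComp_le {f g : ℝ⟦X⟧} {M : ℝ} (hf : ∀ m, |coeff m f| ≤ 1)
    (hg : ∀ m n, |coeff n (g ^ m)| ≤ M ^ n) (n : ℕ) :
    |coeff n (psComp f g)| ≤ (n + 1) * M ^ n := by
  rw [coeff_psComp]
  calc |∑ m ∈ range (n + 1), coeff m f * coeff n (g ^ m)|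
      ≤ ∑ _m ∈ range (n + 1), M ^ n := by
        refine (abs_sum_le_sum_abs _ _).trans (sum_le_sum fun m _ => ?_)
        rw [abs_mul]
        simpa using mul_le_mul (hf m) (hg m n) (abs_nonneg _) zero_le_one
    _ = (n + 1) * M ^ n := by simp

lemma abs_coeff_psLogOneAdd_le {g : ℝ⟦X⟧} {M : ℝ} (hg : ∀ m n, |coeff n (g ^ m)| ≤ M ^ n)
    (n : ℕ) : |coeff n (psLogOneAdd g)| ≤ (n + 1) * M ^ n := by
  refine abs_coeff_psComp_le (fun m => ?_) hg n
  rw [coeff_mk]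
  split_ifs with hm
  · simp
  · rw [abs_div, abs_pow, abs_neg, abs_one, one_pow, Nat.abs_cast]
    exact div_le_one_of_le₀ (Nat.one_le_cast.mpr (Nat.one_le_iff_ne_zero.mpr hm)) (by positivity)

lemma abs_coeff_one_add_X_mul_one_add_X_mul_le {t : ℕ → ℝ} {C : ℝ} (hC : 1 ≤ C)
    (ht : ∀ k, 1 ≤ k → |t k| ≤ C ^ k) (m : ℕ) :
    |coeff m (1 + X * (1 + X) * PowerSeries.mk fun n => t (n + 1))| ≤ (2 * C) ^ m := by
  set T : ℝ⟦X⟧ := X * PowerSeries.mk fun n => t (n + 1)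
  have hT : ∀ m, |coeff m T| ≤ C ^ m := by
    rintro (_ | j)
    · simp [T]
    · rw [coeff_succ_X_mul, coeff_mk]
      exact ht _ (Nat.le_add_left 1 j)
  cases m with
  | zero => simp
  | succ m =>
    rw [show 1 + X * (1 + X) * PowerSeries.mk (fun n => t (n + 1)) = 1 + T + X * T by ring]
    clear_value T
    rw [map_add, map_add, coeff_one, if_neg m.succ_ne_zero, zero_add, coeff_succ_X_mul]
    calc |coeff (m + 1) T + coeff m T| ≤ C ^ (m + 1) + C ^ m :=
          (abs_add_le _ _).trans (add_le_add (hT _) (hT _))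
      _ ≤ 2 * C ^ (m + 1) := by linarith [pow_le_pow_right₀ hC (Nat.le_add_right m 1)]
      _ ≤ (2 * C) ^ (m + 1) := by
          rw [mul_pow]
          gcongr
          exact le_self_pow₀ one_le_two m.succ_ne_zero

lemma exists_lt_pow_of_abs_le_succ_mul_pow {a : ℕ → ℝ} {M : ℝ} (hM : 0 ≤ M)
    (ha : ∀ n, |a n| ≤ (n + 1) * M ^ n) :
    ∃ C₁ : ℝ, 0 < C₁ ∧ ∀ k, 1 ≤ k → |a (k + 1)| < C₁ ^ k := by
  refine ⟨(2 * M + 1) ^ 2, by positivity, fun k hk => ?_⟩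
  have hk2 : ((k + 1 : ℕ) : ℝ) + 1 ≤ 2 ^ (k + 1) := by
    exact_mod_cast Nat.lt_two_pow_self
  calc |a (k + 1)| ≤ (((k + 1 : ℕ) : ℝ) + 1) * M ^ (k + 1) := ha (k + 1)
    _ ≤ 2 ^ (k + 1) * M ^ (k + 1) := by gcongr
    _ = (2 * M) ^ (k + 1) := (mul_pow _ _ _).symm
    _ < (2 * M + 1) ^ (k + 1) := by gcongr; linarith
    _ ≤ (2 * M + 1) ^ (2 * k) := pow_le_pow_right₀ (by linarith) (by omega)
    _ = ((2 * M + 1) ^ 2) ^ k := pow_mul _ _ _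

theorem moments_geometric_bound_general
    (t : ℕ → ℝ) (C : ℝ) (hC : 0 < C) (ht : ∀ k, 1 ≤ k → |t k| ≤ C ^ k)
    (v₀ : PowerSeries ℝ)
    (hinv : psComp v₀
        (PowerSeries.X *
          (1 + PowerSeries.X * (1 + PowerSeries.X) * PowerSeries.mk fun n => t (n + 1))⁻¹)
      = PowerSeries.X) :
    ∃ C₁ : ℝ, 0 < C₁ ∧ ∀ k, 1 ≤ k →
      |PowerSeries.coeff (k + 1) (psLogOneAdd v₀)| < C₁ ^ k := by
  set Q : ℝ⟦X⟧ := 1 + X * (1 + X) * PowerSeries.mk fun n => t (n + 1)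
  have hv : v₀ = X * psComp Q v₀ := eq_X_mul_psComp_of_psComp_X_mul_inv_eq_X (by simp [Q]) hinv
  have hQ : ∀ m, |coeff m Q| ≤ (2 * max C 1) ^ m :=
    abs_coeff_one_add_X_mul_one_add_X_mul_le (le_max_right C 1)
      fun k hk => (ht k hk).trans (pow_le_pow_left₀ hC.le (le_max_left C 1) k)
  have hv_le := abs_coeff_le_of_eq_X_mul_psComp (by positivity) hQ hv
  have hpow := abs_coeff_pow_le_pow (by linarith [le_max_right C 1]) hv_le
  exact exists_lt_pow_of_abs_le_succ_mul_pow (by positivity) (abs_coeff_psLogOneAdd_le hpow)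

/-- Let `(t_k)` satisfy `|t_k| ≤ C^k`, set
`Q(z) = 1 + z(1+z)(t₁ + t₂ z + ⋯)`, let `v₀ = (z/Q(z))^{(-1)}` be the compositional
inverse (the unique series `z + ⋯` with `v₀(z/Q(z)) = z`), and let `m_k` be the
coefficient of `z^{k+1}` in `log(1 + v₀(z))`.  Then there is `C₁ > 0` with
`|m_k| < C₁^k` for all `k ≥ 1`. -/
theorem moments_geometric_bound
    (t : ℕ → ℝ) (C : ℝ) (hC : 0 < C) (ht : ∀ k, 1 ≤ k → |t k| ≤ C ^ k)
    (v₀ : PowerSeries ℝ)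
    (hv0 : PowerSeries.constantCoeff v₀ = 0) (hv1 : PowerSeries.coeff 1 v₀ = 1)
    (hinv : psComp v₀
        (PowerSeries.X *
          (1 + PowerSeries.X * (1 + PowerSeries.X) * PowerSeries.mk fun n => t (n + 1))⁻¹)
      = PowerSeries.X) :
    ∃ C₁ : ℝ, 0 < C₁ ∧ ∀ k, 1 ≤ k →
      |PowerSeries.coeff (k + 1) (psLogOneAdd v₀)| < C₁ ^ k :=
  moments_geometric_bound_general t C hC ht v₀ hinv
end

section
/- Let k ≥ 1, let π be a set partition of ℤ/kℤ, and let C be a cycle structure on π, i.e. a set partition of ℤ/kℤ every block of which is a cycle with respect to π: a subset B ⊆ ℤ/kℤ of size m is a cycle with respect to π if B admits an enumeration b_0, …, b_{m−1} such that for every j (indices taken mod m), the elements b_j + 1 and b_{j+1} belong to the same block of π. Then (number of blocks of π) + (number of blocks of C) ≤ k + 1. -/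
/-!
Order `ℤ/kℤ` by `ZMod.val` and call `x` an entry edge of `π` if the edge `x → x + 1` does not
wrap around and lands on the least element of its block. Every block of `π` other than the one
containing `0` is entered this way at its least element, so `π` has at most `e + 1` blocks, where
`e` is the number of entry edges. In a cycle, the edge arriving at its least element `a` starts at
some `p` with `a.val ≤ p.val`; were it an entry edge, `(p + 1).val = p.val + 1` would be at most
`a.val`. So every cycle contains a non-entry edge, and as the cycles are disjoint there are at
most `k - e` of them.
-/

/-- A finset `B ⊆ ℤ/kℤ` is a *cycle* with respect to a set partition `π` of `ℤ/kℤ`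
if `B` admits an enumeration `b_0, …, b_{m-1}` (`m = |B|`, indices mod `m`) such that
for every `j`, the elements `b_j + 1` and `b_{j+1}` lie in the same block of `π`.
The enumeration is encoded as an `m`-periodic map `b : ℕ → ZMod k` injective on
`{0, …, m-1}` with image `B`. -/
def IsCycleWrt (k : ℕ) [NeZero k] (π : Finpartition (Finset.univ : Finset (ZMod k)))
    (B : Finset (ZMod k)) : Prop :=
  ∃ b : ℕ → ZMod k,
    (∀ j, b (j + B.card) = b j) ∧
    Set.InjOn b (Set.Iio B.card) ∧
    (B : Set (ZMod k)) = b '' Set.Iio B.card ∧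
    ∀ j : ℕ, ∃ blk ∈ π.parts, b j + 1 ∈ blk ∧ b (j + 1) ∈ blk

open Finset

theorem ZMod.val_add_one_of_ne_zero {k : ℕ} [NeZero k] {x : ZMod k} (hx : x + 1 ≠ 0) :
    (x + 1).val = x.val + 1 := by
  have hcast : x + 1 = ((x.val + 1 : ℕ) : ZMod k) := by push_cast [ZMod.natCast_zmod_val]; rfl
  rw [hcast] at hx ⊢
  refine ZMod.val_cast_of_lt (lt_of_le_of_ne x.val_lt fun h => hx ?_)
  rw [h, ZMod.natCast_self]

theorem Finpartition.card_parts_le_of_forall_exists_mem {α : Type*} [DecidableEq α]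
    {s : Finset α} (P : Finpartition s) (t : Finset α) (h : ∀ p ∈ P.parts, ∃ x ∈ t, x ∈ p) :
    #P.parts ≤ #t :=
  card_le_card_of_surjOn P.part fun p hp => by
    obtain ⟨x, hxt, hxp⟩ := h p hp
    exact ⟨x, hxt, P.part_eq_of_mem hp hxp⟩

section EntryEdges

variable {k : ℕ} [NeZero k] (π : Finpartition (univ : Finset (ZMod k)))

def entryEdges : Finset (ZMod k) :=
  univ.filter fun x => x + 1 ≠ 0 ∧ ∀ y ∈ π.part (x + 1), (x + 1).val ≤ y.val

theorem mem_entryEdges {x : ZMod k} :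
    x ∈ entryEdges π ↔ x + 1 ≠ 0 ∧ ∀ y ∈ π.part (x + 1), (x + 1).val ≤ y.val := by
  simp [entryEdges]

theorem card_parts_le_card_entryEdges_add_one : #π.parts ≤ #(entryEdges π) + 1 := by
  have h : #(π.parts.erase (π.part 0)) ≤ #(entryEdges π) := by
    refine card_le_card_of_surjOn (fun x => π.part (x + 1)) fun P hP => ?_
    obtain ⟨hP0, hP⟩ := mem_erase.1 hP
    obtain ⟨a, haP, hmin⟩ := exists_min_image P ZMod.val (π.nonempty_of_mem_parts hP)
    have ha : π.part a = P := π.part_eq_of_mem hP haP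
    refine ⟨a - 1, ?_, by simp only [sub_add_cancel, ha]⟩
    rw [mem_coe, mem_entryEdges, sub_add_cancel, ha]
    exact ⟨by rintro rfl; exact hP0 ha.symm, hmin⟩
  rw [card_erase_of_mem (π.part_mem.2 (mem_univ 0))] at h
  omega

variable {π} {B : Finset (ZMod k)}

theorem IsCycleWrt.exists_pred (hB : IsCycleWrt k π B) {a : ZMod k} (ha : a ∈ B) :
    ∃ p ∈ B, π.part (p + 1) = π.part a := by
  obtain ⟨b, hper, -, himg, hlink⟩ := hB
  rw [← mem_coe, himg] at ha
  obtain ⟨l, hl, rfl⟩ := ha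
  have hl : l < #B := hl
  refine ⟨b (l + #B - 1), ?_, ?_⟩
  · rw [← mem_coe, himg, ← Function.Periodic.map_mod_nat hper]
    exact Set.mem_image_of_mem _ (Nat.mod_lt _ (by omega))
  · obtain ⟨P, hP, h1, h2⟩ := hlink (l + #B - 1)
    rw [Nat.sub_add_cancel (by omega), hper] at h2
    rw [π.part_eq_of_mem hP h1, π.part_eq_of_mem hP h2]

theorem IsCycleWrt.exists_notMem_entryEdges (hB : IsCycleWrt k π B) (hne : B.Nonempty) :
    ∃ x ∈ B, x ∉ entryEdges π := by
  obtain ⟨a, haB, hmin⟩ := exists_min_image B ZMod.val hne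
  obtain ⟨p, hpB, hp⟩ := hB.exists_pred haB
  refine ⟨p, hpB, fun hpE => ?_⟩
  obtain ⟨hp0, hpmin⟩ := (mem_entryEdges π).1 hpE
  have hpa : (p + 1).val ≤ a.val := hpmin a (hp ▸ π.mem_part (mem_univ a))
  have hap : a.val ≤ p.val := hmin p hpB
  have := ZMod.val_add_one_of_ne_zero hp0
  omega

end EntryEdges

theorem blocks_add_cycles_le_general
    (k : ℕ) [NeZero k]
    (π C : Finpartition (Finset.univ : Finset (ZMod k)))
    (hC : ∀ B ∈ C.parts, IsCycleWrt k π B) :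
    π.parts.card + C.parts.card ≤ k + 1 := by
  have hπ := card_parts_le_card_entryEdges_add_one π
  have hC' : #C.parts ≤ #(univ \ entryEdges π) :=
    C.card_parts_le_of_forall_exists_mem _ fun B hB => by
      obtain ⟨x, hxB, hx⟩ := (hC B hB).exists_notMem_entryEdges (C.nonempty_of_mem_parts hB)
      exact ⟨x, mem_sdiff.2 ⟨mem_univ x, hx⟩, hxB⟩
  rw [card_univ_sdiff, ZMod.card] at hC'
  have hE : #(entryEdges π) ≤ k := by simpa using card_le_univ (entryEdges π)
  omega

/-- If `π` is a set partition of `ℤ/kℤ` (`k ≥ 1`) and `C` is a cycle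
structure on `π` (a set partition of `ℤ/kℤ` all of whose blocks are cycles with respect
to `π`), then `(number of blocks of π) + (number of blocks of C) ≤ k + 1`. -/
theorem blocks_add_cycles_le
    (k : ℕ) [NeZero k] (hk : 1 ≤ k)
    (π C : Finpartition (Finset.univ : Finset (ZMod k)))
    (hC : ∀ B ∈ C.parts, IsCycleWrt k π B) :
    π.parts.card + C.parts.card ≤ k + 1 :=
  blocks_add_cycles_le_general k π C hC
end

section
/- Fix γ > 1. Then the function d(x) := (1/π) · arccos((x + γ)/(2√(γ(x+1)))), defined for x in the interval [γ − 2√γ, γ + 2√γ], is nonnegative there and integrates to 1: ∫_{γ−2√γ}^{γ+2√γ} (1/π) arccos((x + γ)/(2√(γ(x+1)))) dx = 1; in particular, for γ > 1 the quantity (x+γ)/(2√(γ(x+1))) lies in [−1, 1] for all x ∈ [γ − 2√γ, γ + 2√γ], so d is a probability density supported on this interval. -/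
/-!
Write `g x = (x + γ) / (2√(γ(x+1)))`. The identity `1 - g² = (4γ - (x-γ)²) / (4γ(x+1))`
shows `|g| ≤ 1` exactly on `[γ - 2√γ, γ + 2√γ]`, with `g = 1` at both endpoints.
Integrating by parts, `x · (arccos ∘ g)' = -x(x+2-γ) / (2(x+1)√(4γ - (x-γ)²))` is
elementary, which yields the antiderivative
`F x = x arccos (g x) - √(4γ - (x-γ)²)/2 + arcsin ((x-γ)/(2√γ))/2
  + arcsin (((γ+1)(x-γ) + 4γ)/(2√γ(x+1)))/2`.
Both arcsin arguments equal `-1` at the left endpoint and `1` at the right one, where the other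
terms vanish, so `F` increases by `π` across the interval.
-/

open Real Set

lemma HasDerivAt.arcsin_of_one_sub_sq_eq {f : ℝ → ℝ} {f' w x : ℝ} (hf : HasDerivAt f f' x)
    (hw : 0 < w) (h : 1 - f x ^ 2 = w ^ 2) :
    HasDerivAt (fun y => arcsin (f y)) (f' / w) x := by
  have hfx : |f x| < 1 := by rw [← sq_lt_one_iff_abs_lt_one]; nlinarith
  have := (hasDerivAt_arcsin (abs_lt.1 hfx).1.ne' (abs_lt.1 hfx).2.ne).comp x hf
  rwa [h, sqrt_sq hw.le, one_div_mul_eq_div] at this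

lemma HasDerivAt.arccos_of_one_sub_sq_eq {f : ℝ → ℝ} {f' w x : ℝ} (hf : HasDerivAt f f' x)
    (hw : 0 < w) (h : 1 - f x ^ 2 = w ^ 2) :
    HasDerivAt (fun y => arccos (f y)) (-(f' / w)) x := by
  simpa only [arccos_eq_pi_div_two_sub_arcsin] using
    (hf.arcsin_of_one_sub_sq_eq hw h).const_sub (π / 2)

lemma mem_Icc_sub_add_two_sqrt_iff {γ x : ℝ} (hγ : 0 ≤ γ) :
    x ∈ Icc (γ - 2 * √γ) (γ + 2 * √γ) ↔ (x - γ) ^ 2 ≤ 4 * γ := by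
  rw [sq_le (by positivity), show (4 : ℝ) * γ = 2 ^ 2 * γ by norm_num, sqrt_mul' _ hγ,
    sqrt_sq zero_le_two, mem_Icc]
  constructor <;> intro h <;> constructor <;> linarith [h.1, h.2]

lemma mem_Ioo_sub_add_two_sqrt_iff {γ x : ℝ} (hγ : 0 ≤ γ) :
    x ∈ Ioo (γ - 2 * √γ) (γ + 2 * √γ) ↔ (x - γ) ^ 2 < 4 * γ := by
  rw [sq_lt, show (4 : ℝ) * γ = 2 ^ 2 * γ by norm_num, sqrt_mul' _ hγ,
    sqrt_sq zero_le_two, mem_Ioo]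
  constructor <;> intro h <;> constructor <;> linarith [h.1, h.2]

lemma one_add_pos_of_mem_Icc {γ x : ℝ} (hγ : 1 < γ)
    (hx : x ∈ Icc (γ - 2 * √γ) (γ + 2 * √γ)) : 0 < x + 1 := by
  have hs : √γ ^ 2 = γ := sq_sqrt (by linarith)
  have hs1 : 1 < √γ := by rw [lt_sqrt zero_le_one]; simpa
  nlinarith [hx.1]

noncomputable def plancherelArg (γ x : ℝ) : ℝ := (x + γ) / (2 * √(γ * (x + 1)))

lemma one_sub_plancherelArg_sq {γ x : ℝ} (hγ : 0 < γ) (hx : 0 < x + 1) :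
    1 - plancherelArg γ x ^ 2 = (4 * γ - (x - γ) ^ 2) / (4 * γ * (x + 1)) := by
  rw [plancherelArg, div_pow, mul_pow, sq_sqrt (by positivity)]
  field_simp
  ring

lemma plancherelArg_mem_Icc {γ x : ℝ} (hγ : 1 < γ)
    (hx : x ∈ Icc (γ - 2 * √γ) (γ + 2 * √γ)) : plancherelArg γ x ∈ Icc (-1) 1 := by
  have hx1 := one_add_pos_of_mem_Icc hγ hx
  have hR := (mem_Icc_sub_add_two_sqrt_iff (by linarith)).1 hx
  have h : 0 ≤ 1 - plancherelArg γ x ^ 2 := by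
    rw [one_sub_plancherelArg_sq (by linarith) hx1]
    exact div_nonneg (by linarith) (by positivity)
  exact abs_le.1 ((sq_le_one_iff_abs_le_one _).1 (by linarith))

lemma hasDerivAt_plancherelArg {γ x : ℝ} (hγ : 0 < γ) (hx : 0 < x + 1) :
    HasDerivAt (plancherelArg γ) ((x + 2 - γ) / (4 * (x + 1) * √(γ * (x + 1)))) x := by
  have hQ : 0 < γ * (x + 1) := mul_pos hγ hx
  have hsqrt : HasDerivAt (fun y => √(γ * (y + 1))) (γ / (2 * √(γ * (x + 1)))) x := by
    simpa using (((hasDerivAt_id' x).add_const 1).const_mul γ).sqrt hQ.ne'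
  refine (((hasDerivAt_id' x).add_const γ).fun_div (hsqrt.const_mul 2)
    (by positivity)).congr_deriv ?_
  field_simp
  rw [sq_sqrt hQ.le]
  ring

lemma hasDerivAt_arccos_plancherelArg {γ x : ℝ} (hγ : 1 < γ)
    (hx : x ∈ Ioo (γ - 2 * √γ) (γ + 2 * √γ)) :
    HasDerivAt (fun y => arccos (plancherelArg γ y))
      (-((x + 2 - γ) / (2 * (x + 1) * √(4 * γ - (x - γ) ^ 2)))) x := by
  have hx1 := one_add_pos_of_mem_Icc hγ (Ioo_subset_Icc_self hx)
  have hR : 0 < 4 * γ - (x - γ) ^ 2 := by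
    linarith [(mem_Ioo_sub_add_two_sqrt_iff (by linarith)).1 hx]
  have hγ0 : 0 < γ := by linarith
  have hQ : 0 < γ * (x + 1) := by positivity
  have h := (hasDerivAt_plancherelArg hγ0 hx1).arccos_of_one_sub_sq_eq
    (w := √(4 * γ - (x - γ) ^ 2) / (2 * √(γ * (x + 1)))) (by positivity) (by
      rw [one_sub_plancherelArg_sq hγ0 hx1, div_pow, mul_pow, sq_sqrt hR.le,
        sq_sqrt hQ.le]
      ring)
  refine h.congr_deriv ?_
  field_simp
  ring

lemma continuousOn_plancherelArg {γ : ℝ} (hγ : 0 < γ) :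
    ContinuousOn (plancherelArg γ) (Ioi (-1)) := by
  unfold plancherelArg
  refine ContinuousOn.div (by fun_prop) (by fun_prop) fun x hx => ?_
  have : 0 < x + 1 := by rw [mem_Ioi] at hx; linarith
  positivity

noncomputable def plancherelPrimitive (γ x : ℝ) : ℝ :=
  x * arccos (plancherelArg γ x) - √(4 * γ - (x - γ) ^ 2) / 2
    + arcsin ((x - γ) / (2 * √γ)) / 2
    + arcsin (((γ + 1) * (x - γ) + 4 * γ) / (2 * √γ * (x + 1))) / 2

lemma hasDerivAt_sqrt_four_mul_sub_sq {γ x : ℝ} (hR : 0 < 4 * γ - (x - γ) ^ 2) :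
    HasDerivAt (fun y => √(4 * γ - (y - γ) ^ 2))
      (-(x - γ) / √(4 * γ - (x - γ) ^ 2)) x := by
  have h := (((hasDerivAt_id' x).sub_const γ).fun_pow 2).const_sub (4 * γ) |>.sqrt hR.ne'
  refine h.congr_deriv ?_
  field_simp
  ring

lemma hasDerivAt_arcsin_sub_div {γ x : ℝ} (hγ : 0 < γ) (hR : 0 < 4 * γ - (x - γ) ^ 2) :
    HasDerivAt (fun y => arcsin ((y - γ) / (2 * √γ))) (1 / √(4 * γ - (x - γ) ^ 2)) x := by
  have h := (((hasDerivAt_id' x).sub_const γ).div_const (2 * √γ)).arcsin_of_one_sub_sq_eq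
    (w := √(4 * γ - (x - γ) ^ 2) / (2 * √γ)) (by positivity) (by
      rw [div_pow, div_pow, mul_pow, sq_sqrt hR.le, sq_sqrt hγ.le]
      field_simp
      ring)
  refine h.congr_deriv ?_
  field_simp

lemma hasDerivAt_arcsin_mobius {γ x : ℝ} (hγ : 1 < γ) (hx : 0 < x + 1)
    (hR : 0 < 4 * γ - (x - γ) ^ 2) :
    HasDerivAt (fun y => arcsin (((γ + 1) * (y - γ) + 4 * γ) / (2 * √γ * (y + 1))))
      ((γ - 1) / ((x + 1) * √(4 * γ - (x - γ) ^ 2))) x := by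
  have hγ0 : 0 < γ := by linarith
  have hγ1 : 0 < γ - 1 := by linarith
  have hnum := (((hasDerivAt_id' x).sub_const γ).const_mul (γ + 1)).add_const (4 * γ)
  have hden := ((hasDerivAt_id' x).add_const 1).const_mul (2 * √γ)
  have h := (hnum.fun_div hden (by positivity)).arcsin_of_one_sub_sq_eq
    (w := (γ - 1) * √(4 * γ - (x - γ) ^ 2) / (2 * √γ * (x + 1))) (by positivity) (by
      rw [div_pow, div_pow, mul_pow, mul_pow, mul_pow, sq_sqrt hR.le, sq_sqrt hγ0.le]
      field_simp
      ring)
  refine h.congr_deriv ?_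
  field_simp
  ring

lemma hasDerivAt_plancherelPrimitive {γ x : ℝ} (hγ : 1 < γ)
    (hx : x ∈ Ioo (γ - 2 * √γ) (γ + 2 * √γ)) :
    HasDerivAt (plancherelPrimitive γ) (arccos (plancherelArg γ x)) x := by
  have hx1 := one_add_pos_of_mem_Icc hγ (Ioo_subset_Icc_self hx)
  have hR : 0 < 4 * γ - (x - γ) ^ 2 := by
    linarith [(mem_Ioo_sub_add_two_sqrt_iff (by linarith)).1 hx]
  have h := ((((hasDerivAt_id' x).mul (hasDerivAt_arccos_plancherelArg hγ hx)).sub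
    ((hasDerivAt_sqrt_four_mul_sub_sq hR).div_const 2)).add
    ((hasDerivAt_arcsin_sub_div (by linarith) hR).div_const 2)).add
    ((hasDerivAt_arcsin_mobius hγ hx1 hR).div_const 2)
  refine h.congr_deriv ?_
  field_simp
  ring

lemma plancherelPrimitive_endpoint {γ σ : ℝ} (hγ : 1 < γ) (hσ : σ ^ 2 = 1) :
    plancherelPrimitive γ (γ + 2 * σ * √γ) = arcsin σ := by
  obtain ⟨s, hs1, rfl⟩ : ∃ s, 1 < s ∧ γ = s ^ 2 :=
    ⟨√γ, by rw [lt_sqrt zero_le_one]; simpa, (sq_sqrt (by linarith)).symm⟩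
  have hσs : 0 < s + σ := by nlinarith [abs_le.1 ((sq_le_one_iff_abs_le_one σ).1 hσ.le)]
  have hx : s ^ 2 + 2 * σ * s + 1 = (s + σ) ^ 2 := by linear_combination -hσ
  have harg : plancherelArg (s ^ 2) (s ^ 2 + 2 * σ * s) = 1 := by
    rw [plancherelArg, hx, ← mul_pow, sqrt_sq (by positivity), div_eq_one_iff_eq (by positivity)]
    ring
  have hR : 4 * s ^ 2 - (s ^ 2 + 2 * σ * s - s ^ 2) ^ 2 = 0 := by
    linear_combination (-4) * s ^ 2 * hσ
  have hu₁ : (s ^ 2 + 2 * σ * s - s ^ 2) / (2 * s) = σ := by field_simp; ring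
  have hu₂ :
      ((s ^ 2 + 1) * (s ^ 2 + 2 * σ * s - s ^ 2) + 4 * s ^ 2) / (2 * s * (s + σ) ^ 2) = σ := by
    rw [div_eq_iff (by positivity)]
    linear_combination (-(2 * σ * s + 4 * s ^ 2)) * hσ
  rw [sqrt_sq (by linarith), plancherelPrimitive, harg, sqrt_sq (by linarith), hR, hu₁, hx, hu₂,
    arccos_one, sqrt_zero]
  ring

lemma continuousOn_plancherelPrimitive {γ : ℝ} (hγ : 0 < γ) :
    ContinuousOn (plancherelPrimitive γ) (Ioi (-1)) := by
  have harg := continuousOn_plancherelArg hγ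
  have hden : ∀ x ∈ Ioi (-1 : ℝ), 2 * √γ * (x + 1) ≠ 0 := fun x hx => by
    have : 0 < x + 1 := by rw [mem_Ioi] at hx; linarith
    positivity
  unfold plancherelPrimitive
  fun_prop (disch := assumption)

theorem integral_arccos_plancherelArg {γ : ℝ} (hγ : 1 < γ) :
    ∫ x in (γ - 2 * √γ)..(γ + 2 * √γ), arccos (plancherelArg γ x) = π := by
  have hγ0 : 0 < γ := by linarith
  have hab : γ - 2 * √γ ≤ γ + 2 * √γ := by linarith [sqrt_nonneg γ]
  have hIcc : Icc (γ - 2 * √γ) (γ + 2 * √γ) ⊆ Ioi (-1) := fun x hx => by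
    rw [mem_Ioi]; linarith [one_add_pos_of_mem_Icc hγ hx]
  have hint : IntervalIntegrable (fun x => arccos (plancherelArg γ x)) MeasureTheory.volume
      (γ - 2 * √γ) (γ + 2 * √γ) :=
    (continuous_arccos.comp_continuousOn
      ((continuousOn_plancherelArg hγ0).mono hIcc)).intervalIntegrable_of_Icc hab
  have hright : plancherelPrimitive γ (γ + 2 * √γ) = π / 2 := by
    simpa [arcsin_one] using plancherelPrimitive_endpoint (σ := 1) hγ (one_pow 2)
  have hleft : plancherelPrimitive γ (γ - 2 * √γ) = -(π / 2) := by
    simpa [arcsin_neg_one, ← sub_eq_add_neg] using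
      plancherelPrimitive_endpoint (σ := -1) hγ (by norm_num)
  rw [intervalIntegral.integral_eq_sub_of_hasDerivAt_of_le hab
    ((continuousOn_plancherelPrimitive hγ0).mono hIcc)
    (fun x hx => hasDerivAt_plancherelPrimitive hγ hx) hint, hright, hleft]
  ring

/-- For `γ > 1`, the function
`d(x) = (1/π) arccos((x+γ)/(2√(γ(x+1))))` on `[γ - 2√γ, γ + 2√γ]` is a probability
density: the argument of `arccos` lies in `[-1, 1]` there, `d ≥ 0`, and
`∫_{γ-2√γ}^{γ+2√γ} d(x) dx = 1`. -/
theorem plancherel_density_integral_eq_one (γ : ℝ) (hγ : 1 < γ) :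
    (∀ x ∈ Set.Icc (γ - 2 * Real.sqrt γ) (γ + 2 * Real.sqrt γ),
      (x + γ) / (2 * Real.sqrt (γ * (x + 1))) ∈ Set.Icc (-1 : ℝ) 1 ∧
      0 ≤ (1 / π) * Real.arccos ((x + γ) / (2 * Real.sqrt (γ * (x + 1))))) ∧
    ∫ x in (γ - 2 * Real.sqrt γ)..(γ + 2 * Real.sqrt γ),
        (1 / π) * Real.arccos ((x + γ) / (2 * Real.sqrt (γ * (x + 1)))) = 1 := by
  refine ⟨fun x hx =>
    ⟨plancherelArg_mem_Icc hγ hx, mul_nonneg (by positivity) (arccos_nonneg _)⟩, ?_⟩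
  rw [intervalIntegral.integral_const_mul]
  change 1 / π * ∫ x in _.._, arccos (plancherelArg γ x) = 1
  rw [integral_arccos_plancherelArg hγ, one_div_mul_cancel pi_ne_zero]
end
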